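/- arXiv:1504.00169 — 6 statements merged into one kernel-verified Lean document; each statement's English description precedes it below -/
import Mathlib

section
/- Let A be a finite set with |A| = q ≥ 2 and let n ≥ 2. There is no transformation f : A^n → A^n such that Sing(A^n) ⊆ S_f, where S_f is the subsemigroup of Tran(A^n) generated by the n instructions induced by the coordinate functions of f. -/
/-! The map sending `b` to `a` and fixing every other point is singular and identifies no pair
of points other than `{a, b}`. Write it as a word in the instructions and strip the leading
injective (hence bijective) instructions: they change no coordinate whose instruction is
non-injective, and the first non-injective instruction `F^(i)` must identify the images of `a`
and `b`, which therefore differ only at `i`. Hence any two distinct points differ in exactly one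
coordinate whose instruction is non-injective. Points differing in a single coordinate `j` show
that every `F^(j)` is non-injective, and then two points differing everywhere force `n = 1`. -/

/-- The instruction of `A^m` induced by the `i`-th coordinate function of `f`:
it updates register `i` to `f x i` and leaves all other registers unchanged. -/
def instr {A : Type*} {m : ℕ} (f : (Fin m → A) → Fin m → A) (i : Fin m) :
    (Fin m → A) → Fin m → A :=
  fun x => Function.update x i (f x i)

/-- Apply a list of induced instructions of `f`, first element of the list first. -/
def applyInstrs {A : Type*} {m : ℕ} (f : (Fin m → A) → Fin m → A) :
    List (Fin m) → (Fin m → A) → Fin m → A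
  | [], x => x
  | i :: l, x => applyInstrs f l (instr f i x)

def MergesExactly {α β : Type*} (w : α → β) (a b : α) : Prop :=
  a ≠ b ∧ ∀ x y, x ≠ y → (w x = w y ↔ s(x, y) = s(a, b))

namespace MergesExactly

variable {α β : Type*} {w : α → β} {a b : α}

theorem not_injective (hw : MergesExactly w a b) : ¬ Function.Injective w :=
  fun hinj => hw.1 (hinj ((hw.2 a b hw.1).2 rfl))

theorem not_bijective (hw : MergesExactly w a b) : ¬ Function.Bijective w :=
  fun hbij => hw.not_injective hbij.1

theorem of_comp_bijective {e : α → α} (hw : MergesExactly (w ∘ e) a b)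
    (he : Function.Bijective e) : MergesExactly w (e a) (e b) := by
  refine ⟨fun h => hw.1 (he.1 h), fun x y hxy => ?_⟩
  obtain ⟨p, rfl⟩ := he.2 x
  obtain ⟨q, rfl⟩ := he.2 y
  have hpq : p ≠ q := fun h => hxy (congrArg e h)
  rw [← Sym2.map_mk, ← Sym2.map_mk, (Sym2.map.injective he.1).eq_iff]
  exact hw.2 p q hpq

theorem apply_eq_of_comp {γ : Type*} {g : γ → β} {h : α → γ} (hw : MergesExactly (g ∘ h) a b)
    {u v : α} (huv : h u = h v) (hne : u ≠ v) : h a = h b := by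
  have hpair : s(u, v) = s(a, b) := (hw.2 u v hne).1 (congrArg g huv)
  rcases Sym2.eq_iff.1 hpair with ⟨rfl, rfl⟩ | ⟨rfl, rfl⟩
  · exact huv
  · exact huv.symm

end MergesExactly

theorem mergesExactly_update_id {α : Type*} [DecidableEq α] {a b : α} (hab : a ≠ b) :
    MergesExactly (Function.update id b a) a b := by
  refine ⟨hab, fun x y hxy => ?_⟩
  rw [Sym2.eq_iff]
  by_cases hx : x = b <;> by_cases hy : y = b <;>
    simp only [Function.update_apply, hx, hy, if_true, if_false, id] <;> grind

section Instructions

variable {A : Type*} {n : ℕ} (f : (Fin n → A) → Fin n → A)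

theorem instr_apply_of_ne {i j : Fin n} (hji : j ≠ i) (x : Fin n → A) : instr f i x j = x j :=
  Function.update_of_ne hji _ _

theorem existsUnique_not_injective_instr_ne [Finite A] :
    ∀ {l : List (Fin n)}, l ≠ [] → ∀ {a b : Fin n → A}, MergesExactly (applyInstrs f l) a b →
      ∃! j, ¬ Function.Injective (instr f j) ∧ a j ≠ b j
  | [], hl, _, _, _ => absurd rfl hl
  | i :: l, _, a, b, hw => by
    replace hw : MergesExactly (applyInstrs f l ∘ instr f i) a b := hw
    by_cases hi : Function.Injective (instr f i)
    · have hw' := hw.of_comp_bijective (Finite.injective_iff_bijective.1 hi)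
      obtain rfl | hl := eq_or_ne l []
      · exact absurd Function.injective_id hw'.not_injective
      refine (existsUnique_congr fun j => and_congr_right fun hj => ?_).1
        (existsUnique_not_injective_instr_ne hl hw')
      have hji : j ≠ i := fun h => hj (h ▸ hi)
      rw [instr_apply_of_ne f hji, instr_apply_of_ne f hji]
    · obtain ⟨u, v, huv, hne⟩ := Function.not_injective_iff.1 hi
      have hab := hw.apply_eq_of_comp huv hne
      have hoff : ∀ j, j ≠ i → a j = b j := fun j hji => by
        simpa only [instr_apply_of_ne f hji] using congrFun hab j
      refine ⟨i, ⟨hi, fun hi' => hw.1 (funext fun j => ?_)⟩, fun j hj => ?_⟩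
      · obtain rfl | hji := eq_or_ne j i
        exacts [hi', hoff j hji]
      · by_contra hji
        exact hj.2 (hoff j hji)

end Instructions

theorem subsingleton_of_forall_existsUnique_ne {ι A : Type*} [Nontrivial A] (N : ι → Prop)
    (h : ∀ a b : ι → A, a ≠ b → ∃! j, N j ∧ a j ≠ b j) : Subsingleton ι := by
  classical
  obtain ⟨α, β, hαβ⟩ := exists_pair_ne A
  have hN : ∀ j, N j := by
    intro j
    have hne : (fun _ => α) ≠ Function.update (fun _ : ι => α) j β := fun h' =>
      hαβ (by simpa using congrFun h' j)
    obtain ⟨k, ⟨hk, hak⟩, -⟩ := h _ _ hne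
    obtain rfl : k = j := by
      by_contra hkj
      exact hak (Function.update_of_ne hkj β (fun _ => α)).symm
    exact hk
  refine ⟨fun j₀ j₁ => ?_⟩
  obtain ⟨k, -, hk⟩ := h (fun _ => α) (fun _ => β) fun h' => hαβ (congrFun h' j₀)
  exact (hk j₀ ⟨hN j₀, hαβ⟩).trans (hk j₁ ⟨hN j₁, hαβ⟩).symm

/-- There is no transformation `f` of `A^n` such that every singular (non-bijective)
transformation of `A^n` lies in the semigroup generated by the instructions induced
by the coordinate functions of `f`. -/
theorem no_singular_semigroup (q n : ℕ) (hq : 2 ≤ q) (hn : 2 ≤ n)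
    (A : Type*) [Fintype A] (hA : Fintype.card A = q) :
    ¬ ∃ f : (Fin n → A) → Fin n → A,
        ∀ g : (Fin n → A) → Fin n → A, ¬ Function.Bijective g →
          ∃ l : List (Fin n), l ≠ [] ∧ ∀ x, g x = applyInstrs f l x := by
  classical
  rintro ⟨f, hf⟩
  have : Nontrivial A := Fintype.one_lt_card_iff_nontrivial.1 (by omega)
  have : Nontrivial (Fin n) := Fin.nontrivial_iff_two_le.2 hn
  refine not_subsingleton (Fin n) (subsingleton_of_forall_existsUnique_ne (A := A)
    (fun j => ¬ Function.Injective (instr f j)) fun a b hab => ?_)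
  have hmerge := mergesExactly_update_id hab
  obtain ⟨l, hl, hword⟩ := hf _ hmerge.not_bijective
  exact existsUnique_not_injective_instr_ne f hl (funext hword ▸ hmerge)
end

section
/- Let A be a finite set with |A| = q ≥ 2 and let n ≥ 2. There is no n-universal transformation of size n; that is, there is no f : A^n → A^n that simulates every transformation g : A^n → A^n (here m = n and the projection pr is the identity). -/
section applyInstrs

variable {A : Type*} {m : ℕ} (f : (Fin m → A) → Fin m → A)

theorem applyInstrs_cons (i : Fin m) (l : List (Fin m)) :
    applyInstrs f (i :: l) = applyInstrs f l ∘ instr f i :=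
  rfl

theorem applyInstrs_apply_of_notMem {l : List (Fin m)} {i : Fin m} (hi : i ∉ l)
    (x : Fin m → A) : applyInstrs f l x i = x i := by
  induction l generalizing x with
  | nil => rfl
  | cons j l ih =>
    rw [List.mem_cons, not_or] at hi
    rw [applyInstrs, ih hi.2, instr, Function.update_of_ne hi.1]

theorem injective_applyInstrs (h : ∀ i, Function.Injective (instr f i)) (l : List (Fin m)) :
    Function.Injective (applyInstrs f l) := by
  induction l with
  | nil => exact Function.injective_id
  | cons i l ih => exact ih.comp (h i)

theorem injective_instr_of_mem [Finite A] {l : List (Fin m)}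
    (hl : Function.Injective (applyInstrs f l)) {i : Fin m} (hi : i ∈ l) :
    Function.Injective (instr f i) := by
  induction l with
  | nil => cases hi
  | cons j l ih =>
    rw [applyInstrs_cons] at hl
    have hj : Function.Injective (instr f j) := hl.of_comp
    rcases List.mem_cons.mp hi with rfl | hi
    · exact hj
    · exact ih (hl.of_comp_right (Finite.injective_iff_surjective.mp hj)) hi

end applyInstrs

theorem no_universal_of_size_n_general (q n : ℕ) (hq : 2 ≤ q)
    (A : Type*) [Fintype A] (hA : Fintype.card A = q) :
    ¬ ∃ f : (Fin n → A) → Fin n → A,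
        ∀ g : (Fin n → A) → Fin n → A,
          ∃ l : List (Fin n), l ≠ [] ∧ ∀ x, g x = applyInstrs f l x := by
  rintro ⟨f, hf⟩
  obtain ⟨a, b, hab⟩ := Fintype.exists_pair_of_one_lt_card (by omega : 1 < Fintype.card A)
  have hinstr : ∀ i, Function.Injective (instr f i) := by
    intro i
    classical
    let c : Fin n → A := fun _ => a
    obtain ⟨l, -, hl⟩ := hf (Equiv.swap c (Function.update c i b))
    have hi : i ∈ l := by
      by_contra hi
      have hci := applyInstrs_apply_of_notMem f hi c
      rw [← hl, Equiv.swap_apply_left, Function.update_self] at hci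
      exact hab hci.symm
    exact injective_instr_of_mem f (funext hl ▸ Equiv.injective _) hi
  obtain ⟨l, hne, hl⟩ := hf fun _ _ => a
  obtain ⟨i, -⟩ := List.exists_mem_of_ne_nil l hne
  have hconst := injective_applyInstrs f hinstr l ((hl fun _ => a).symm.trans (hl fun _ => b))
  exact hab (congrFun hconst i)

/-- There is no `n`-universal transformation of size `n`: no transformation `f` of `A^n`
simulates every transformation `g` of `A^n` (with `m = n` the projection is the identity,
so simulation means `g` equals a nonempty composition of instructions induced by `f`). -/
theorem no_universal_of_size_n (q n : ℕ) (hq : 2 ≤ q) (hn : 2 ≤ n)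
    (A : Type*) [Fintype A] (hA : Fintype.card A = q) :
    ¬ ∃ f : (Fin n → A) → Fin n → A,
        ∀ g : (Fin n → A) → Fin n → A,
          ∃ l : List (Fin n), l ≠ [] ∧ ∀ x, g x = applyInstrs f l x :=
  no_universal_of_size_n_general q n hq A hA
end

section
/- For every q ≥ 2 there is a constant C > 0 such that for every n ≥ 2 and every finite set A with |A| = q, there exist m ≥ n and an n-universal transformation f : A^m → A^m whose time satisfies t_f ≤ q^n + C·n. -/
/-- Projection of `A^m` onto the first `n` coordinates. -/
def pr {A : Type*} {m n : ℕ} (hmn : n ≤ m) (x : Fin m → A) : Fin n → A :=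
  fun i => x (Fin.castLE hmn i)

/-!
Identify `A` with `ZMod q`. The machine has `n` output registers, `n` snapshot registers and a
counter `c (u, v)` for every pair of words; its readout is the linear form `∑ v * c (u, v)`.
To simulate `g`: copy the readout into the snapshots (`n` steps); fire the counters of the `q ^ n`
pairs `(u, g u)`, of which only the one with `u` equal to the current output is incremented, so
the readout grows by exactly `g u`; finally set each output to readout minus snapshot (`n` steps).
-/

section Instructions

variable {A : Type*} {m : ℕ}

lemma applyInstrs_append (f : (Fin m → A) → Fin m → A) (l₁ l₂ : List (Fin m))
    (x : Fin m → A) :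
    applyInstrs f (l₁ ++ l₂) x = applyInstrs f l₂ (applyInstrs f l₁ x) := by
  induction l₁ generalizing x with
  | nil => rfl
  | cons c l ih => exact ih _

lemma applyInstrs_apply_of_not_mem (f : (Fin m → A) → Fin m → A) {l : List (Fin m)}
    {d : Fin m} (hd : d ∉ l) (x : Fin m → A) : applyInstrs f l x d = x d := by
  induction l generalizing x with
  | nil => rfl
  | cons c l ih =>
    rw [List.mem_cons, not_or] at hd
    exact (ih hd.2 _).trans (Function.update_of_ne hd.1 _ _)

/-- Firing distinct coordinates, none of which reads another fired coordinate, acts as one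
parallel update. -/
lemma applyInstrs_apply_of_mem (f : (Fin m → A) → Fin m → A) {l : List (Fin m)}
    (hl : l.Nodup)
    (hread : ∀ c ∈ l, ∀ z z' : Fin m → A,
      (∀ d, d ∉ l → z d = z' d) → z c = z' c → f z c = f z' c)
    {d : Fin m} (hd : d ∈ l) (x : Fin m → A) : applyInstrs f l x d = f x d := by
  induction l generalizing x with
  | nil => cases hd
  | cons c l ih =>
    obtain ⟨hcl, hl⟩ := List.nodup_cons.mp hl
    change applyInstrs f l (instr f c x) d = f x d
    rcases List.mem_cons.mp hd with rfl | hd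
    · rw [applyInstrs_apply_of_not_mem f hcl]
      exact Function.update_self _ _ _
    · have hdc : d ≠ c := fun h => hcl (h ▸ hd)
      rw [ih hl (fun c' hc' z z' hz => hread c' (List.mem_cons_of_mem _ hc') z z'
        (fun e he => hz e fun h => he (List.mem_cons_of_mem _ h))) hd]
      refine hread d (List.mem_cons_of_mem _ hd) _ _ (fun e he => ?_)
        (Function.update_of_ne hdc _ _)
      exact Function.update_of_ne (by rintro rfl; exact he List.mem_cons_self) _ _

variable {B : Type*}

lemma applyInstrs_conj (e : A ≃ B) (f : (Fin m → B) → Fin m → B) (l : List (Fin m))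
    (x : Fin m → A) :
    applyInstrs (fun y => e.symm ∘ f (e ∘ y)) l x = e.symm ∘ applyInstrs f l (e ∘ x) := by
  induction l generalizing x with
  | nil => funext i; simp [applyInstrs]
  | cons c l ih =>
    have hstep : e ∘ instr (fun y => e.symm ∘ f (e ∘ y)) c x = instr f c (e ∘ x) := by
      simp only [instr, Function.comp_update, Function.comp_apply, Equiv.apply_symm_apply]
    exact (ih _).trans (congrArg _ (congrArg _ hstep))

end Instructions

def IsUniversalWithin {A : Type*} {m n : ℕ} (hmn : n ≤ m) (f : (Fin m → A) → Fin m → A)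
    (T : ℕ) : Prop :=
  ∀ g : (Fin n → A) → Fin n → A,
    ∃ l : List (Fin m), l ≠ [] ∧ l.length ≤ T ∧ ∀ x, g (pr hmn x) = pr hmn (applyInstrs f l x)

lemma IsUniversalWithin.conj {A B : Type*} {m n : ℕ} {hmn : n ≤ m}
    {f : (Fin m → B) → Fin m → B} {T : ℕ} (hf : IsUniversalWithin hmn f T) (e : A ≃ B) :
    IsUniversalWithin hmn (fun y => e.symm ∘ f (e ∘ y)) T := by
  intro g
  obtain ⟨l, hne, hlen, hsim⟩ := hf fun u => e ∘ g (e.symm ∘ u)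
  refine ⟨l, hne, hlen, fun x => ?_⟩
  have hx : e.symm ∘ pr hmn (e ∘ x) = pr hmn x := by funext i; simp [pr]
  calc g (pr hmn x) = e.symm ∘ (e ∘ g (e.symm ∘ pr hmn (e ∘ x))) := by
        rw [hx]; funext i; simp
    _ = pr hmn (applyInstrs (fun y => e.symm ∘ f (e ∘ y)) l x) := by
        rw [hsim, applyInstrs_conj]; rfl

namespace UniversalMachine

variable (R : Type*) [Fintype R] (n : ℕ)

/-- Registers: `n` outputs, then `n` snapshots, then one counter for each pair `(u, v)`. -/
abbrev size : ℕ := n + (n + Fintype.card ((Fin n → R) × (Fin n → R)))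

variable {R n}

def out (i : Fin n) : Fin (size R n) := Fin.castAdd _ i

def snap (i : Fin n) : Fin (size R n) := Fin.natAdd n (Fin.castAdd _ i)

noncomputable def counter (p : (Fin n → R) × (Fin n → R)) : Fin (size R n) :=
  Fin.natAdd n (Fin.natAdd n (Fintype.equivFin _ p))

def outputs (x : Fin (size R n) → R) : Fin n → R := fun i => x (out i)

lemma out_injective : Function.Injective (out (R := R) (n := n)) := by
  intro i j h
  simpa [out] using h

lemma snap_injective : Function.Injective (snap (R := R) (n := n)) := by
  intro i j h
  simpa [snap] using h

lemma counter_injective : Function.Injective (counter (R := R) (n := n)) := by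
  intro p p' h
  simpa [counter] using h

lemma out_ne_snap (i j : Fin n) : out (R := R) i ≠ snap j := by
  simp only [out, snap, ne_eq, Fin.ext_iff, Fin.val_castAdd, Fin.val_natAdd]
  omega

lemma out_ne_counter (i : Fin n) (p : (Fin n → R) × (Fin n → R)) : out i ≠ counter p := by
  simp only [out, counter, ne_eq, Fin.ext_iff, Fin.val_castAdd, Fin.val_natAdd]
  omega

lemma snap_ne_counter (i : Fin n) (p : (Fin n → R) × (Fin n → R)) : snap i ≠ counter p := by
  simp only [snap, counter, ne_eq, Fin.ext_iff, Fin.val_castAdd, Fin.val_natAdd]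
  omega

def snaps : List (Fin (size R n)) := List.ofFn snap

noncomputable def counters (g : (Fin n → R) → Fin n → R) : List (Fin (size R n)) :=
  (Finset.univ : Finset (Fin n → R)).toList.map fun u => counter (u, g u)

def outs : List (Fin (size R n)) := List.ofFn out

lemma counter_mem_counters {g : (Fin n → R) → Fin n → R} {p : (Fin n → R) × (Fin n → R)} :
    counter p ∈ counters g ↔ p = (p.1, g p.1) := by
  simp only [counters, List.mem_map, Finset.mem_toList, Finset.mem_univ, true_and,
    counter_injective.eq_iff]
  exact ⟨fun ⟨u, hu⟩ => hu ▸ rfl, fun hp => ⟨p.1, hp.symm⟩⟩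

lemma snaps_nodup : (snaps (R := R) (n := n)).Nodup := List.nodup_ofFn.mpr snap_injective

lemma counters_nodup (g : (Fin n → R) → Fin n → R) : (counters g).Nodup :=
  (Finset.nodup_toList _).map fun _ _ h => congrArg Prod.fst (counter_injective h)

lemma outs_nodup : (outs (R := R) (n := n)).Nodup := List.nodup_ofFn.mpr out_injective

noncomputable def program (g : (Fin n → R) → Fin n → R) : List (Fin (size R n)) :=
  snaps ++ counters g ++ outs

lemma length_program (g : (Fin n → R) → Fin n → R) :
    (program g).length = Fintype.card R ^ n + 2 * n := by
  simp only [program, snaps, counters, outs, List.length_append, List.length_ofFn,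
    List.length_map, Finset.length_toList, Finset.card_univ, Fintype.card_fun, Fintype.card_fin]
  ring

variable [Ring R]

noncomputable def readout (x : Fin (size R n) → R) (i : Fin n) : R :=
  ∑ p : (Fin n → R) × (Fin n → R), p.2 i * x (counter p)

lemma readout_congr {x y : Fin (size R n) → R} (h : ∀ p, x (counter p) = y (counter p)) :
    readout x = readout y := by
  funext i
  simp only [readout, h]

variable [DecidableEq R]

lemma readout_eq_add_of_counter_eq {x y : Fin (size R n) → R} {u v : Fin n → R}
    (h : ∀ p, x (counter p) = y (counter p) + if p = (u, v) then 1 else 0) (i : Fin n) :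
    readout x i = readout y i + v i := by
  simp only [readout, h, mul_add, Finset.sum_add_distrib, mul_ite, mul_one, mul_zero,
    Finset.sum_ite_eq', Finset.mem_univ, if_true]

variable (R n)

noncomputable def machine (x : Fin (size R n) → R) : Fin (size R n) → R :=
  Fin.addCases (motive := fun _ => R) (fun i => readout x i - x (snap i))
    (Fin.addCases (motive := fun _ => R) (readout x) fun k =>
      let p := (Fintype.equivFin _).symm k
      x (counter p) + if outputs x = p.1 then 1 else 0)

variable {R n}

lemma machine_out (x : Fin (size R n) → R) (i : Fin n) :
    machine R n x (out i) = readout x i - x (snap i) :=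
  Fin.addCases_left _

lemma machine_snap (x : Fin (size R n) → R) (i : Fin n) :
    machine R n x (snap i) = readout x i := by
  simp only [machine, snap, Fin.addCases_right, Fin.addCases_left]

lemma machine_counter (x : Fin (size R n) → R) (p : (Fin n → R) × (Fin n → R)) :
    machine R n x (counter p) = x (counter p) + if outputs x = p.1 then 1 else 0 := by
  simp only [machine, counter, Fin.addCases_right, Equiv.symm_apply_apply]

section Phases

variable (x : Fin (size R n) → R) (g : (Fin n → R) → Fin n → R)

lemma applyInstrs_snaps_snap (i : Fin n) :
    applyInstrs (machine R n) snaps x (snap i) = readout x i := by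
  refine (applyInstrs_apply_of_mem _ snaps_nodup ?_ (List.mem_ofFn.mpr ⟨i, rfl⟩) x).trans
    (machine_snap x i)
  rintro _ hc z z' hz -
  obtain ⟨j, rfl⟩ := List.mem_ofFn.mp hc
  rw [machine_snap, machine_snap,
    readout_congr fun p => hz _ fun h => ?_]
  obtain ⟨k, hk⟩ := List.mem_ofFn.mp h
  exact snap_ne_counter k p hk

lemma readout_applyInstrs_snaps : readout (applyInstrs (machine R n) snaps x) = readout x :=
  readout_congr fun p => applyInstrs_apply_of_not_mem _
    (fun h => (List.mem_ofFn.mp h).elim fun i hi => snap_ne_counter i p hi) x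

lemma outputs_applyInstrs_snaps : outputs (applyInstrs (machine R n) snaps x) = outputs x :=
  funext fun i => applyInstrs_apply_of_not_mem _
    (fun h => (List.mem_ofFn.mp h).elim fun j hj => out_ne_snap i j hj.symm) x

lemma applyInstrs_counters_snap (i : Fin n) :
    applyInstrs (machine R n) (counters g) x (snap i) = x (snap i) := by
  refine applyInstrs_apply_of_not_mem _ (fun h => ?_) x
  obtain ⟨u, -, hu⟩ := List.mem_map.mp h
  exact snap_ne_counter i _ hu.symm

lemma readout_applyInstrs_counters (i : Fin n) :
    readout (applyInstrs (machine R n) (counters g) x) i = readout x i + g (outputs x) i := by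
  have hread : ∀ c ∈ counters g, ∀ z z' : Fin (size R n) → R,
      (∀ d, d ∉ counters g → z d = z' d) → z c = z' c →
        machine R n z c = machine R n z' c := by
    intro c hc z z' hz hzc
    obtain ⟨u, -, rfl⟩ := List.mem_map.mp hc
    have hout : outputs z = outputs z' := funext fun j => hz _ fun h => by
      obtain ⟨v, -, hv⟩ := List.mem_map.mp h
      exact out_ne_counter j _ hv.symm
    rw [machine_counter, machine_counter, hzc, hout]
  refine readout_eq_add_of_counter_eq (u := outputs x) (v := g (outputs x)) (fun p => ?_) i
  by_cases hp : p = (p.1, g p.1)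
  · rw [applyInstrs_apply_of_mem _ (counters_nodup g) hread (counter_mem_counters.mpr hp),
      machine_counter]
    refine congrArg (_ + ·) (if_congr ⟨fun h => hp.trans (by rw [h]), ?_⟩ rfl rfl)
    rintro rfl
    rfl
  · rw [applyInstrs_apply_of_not_mem _ (mt counter_mem_counters.mp hp), if_neg, add_zero]
    rintro rfl
    exact hp rfl

lemma outputs_applyInstrs_outs :
    outputs (applyInstrs (machine R n) outs x) = readout x - fun i => x (snap i) := by
  have hread : ∀ c ∈ (outs : List (Fin (size R n))), ∀ z z' : Fin (size R n) → R,
      (∀ d, d ∉ outs → z d = z' d) → z c = z' c → machine R n z c = machine R n z' c := by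
    rintro c hc z z' hz -
    obtain ⟨j, rfl⟩ := List.mem_ofFn.mp hc
    have hsnap : z (snap j) = z' (snap j) := hz _ fun h => by
      obtain ⟨k, hk⟩ := List.mem_ofFn.mp h
      exact out_ne_snap k j hk
    rw [machine_out, machine_out, hsnap, readout_congr fun p => hz _ fun h => ?_]
    obtain ⟨k, hk⟩ := List.mem_ofFn.mp h
    exact out_ne_counter k p hk
  funext i
  exact (applyInstrs_apply_of_mem _ outs_nodup hread (List.mem_ofFn.mpr ⟨i, rfl⟩) x).trans
    (machine_out x i)

end Phases

lemma outputs_applyInstrs_program (x : Fin (size R n) → R) (g : (Fin n → R) → Fin n → R) :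
    outputs (applyInstrs (machine R n) (program g) x) = g (outputs x) := by
  funext i
  rw [program, applyInstrs_append, applyInstrs_append, outputs_applyInstrs_outs, Pi.sub_apply,
    readout_applyInstrs_counters, applyInstrs_counters_snap, applyInstrs_snaps_snap,
    readout_applyInstrs_snaps, outputs_applyInstrs_snaps, add_sub_cancel_left]

theorem machine_isUniversalWithin :
    IsUniversalWithin (Nat.le_add_right n _) (machine R n) (Fintype.card R ^ n + 2 * n) := by
  intro g
  refine ⟨program g, ?_, (length_program g).le, fun x => (outputs_applyInstrs_program x g).symm⟩
  rw [← List.length_pos_iff, length_program]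
  have : 0 < Fintype.card R := Fintype.card_pos
  positivity

end UniversalMachine

/-- For every `q ≥ 2` there is `C > 0` such that for every `n ≥ 2` and finite `A` with
`|A| = q`, there exist `m ≥ n` and an `n`-universal transformation of `A^m` with time
at most `q^n + C·n`. -/
theorem universal_time_qn (q : ℕ) (hq : 2 ≤ q) :
    ∃ C : ℕ, 0 < C ∧
      ∀ (n : ℕ), 2 ≤ n → ∀ (A : Type) [Fintype A], Fintype.card A = q →
        ∃ (m : ℕ) (hmn : n ≤ m) (f : (Fin m → A) → Fin m → A),
          ∀ g : (Fin n → A) → Fin n → A,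
            ∃ l : List (Fin m), l ≠ [] ∧ l.length ≤ q ^ n + C * n ∧
              ∀ x, g (pr hmn x) = pr hmn (applyInstrs f l x) := by
  have : NeZero q := ⟨by omega⟩
  refine ⟨2, two_pos, fun n _ A _ hA => ?_⟩
  have hsim := UniversalMachine.machine_isUniversalWithin (R := ZMod q) (n := n)
  rw [ZMod.card] at hsim
  exact ⟨_, _, _, hsim.conj (Fintype.equivOfCardEq (by rw [hA, ZMod.card]))⟩
end

section
/- For every q ≥ 2 and every ε > 0 there exists N such that for every n ≥ N there exists an (n, q^{q^n})-pseudo-Gray code P (over an alphabet of size q^{q^n}) with redundancy R(P) ≤ ε·q^{n·q^n}. -/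
set_option maxHeartbeats 1000000

/-- The coordinate sequence `cs` can be partitioned into at most `r` consecutive runs,
i.e. nonempty blocks with pairwise distinct entries. -/
def RunsLE {n : ℕ} (cs : List (Fin n)) (r : ℝ) : Prop :=
  ∃ bs : List (List (Fin n)),
    bs.flatten = cs ∧ (∀ b ∈ bs, b ≠ [] ∧ b.Nodup) ∧ (bs.length : ℝ) ≤ r

namespace PGC

variable {ι α β γ : Type*}

/-- `x` and `y` differ exactly in coordinate `c`. -/
def StepAt (x y : ι → α) (c : ι) : Prop := ∀ j, x j ≠ y j ↔ j = c

lemma StepAt.symm {x y : ι → α} {c : ι} (h : StepAt x y c) : StepAt y x c := by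
  intro j; rw [ne_comm]; exact h j

inductive Aligned : List (ι → α) → List ι → Prop
  | single (x : ι → α) : Aligned [x] []
  | cons {y : ι → α} {l : List (ι → α)} {cs : List ι} (x : ι → α) (c : ι)
      (h : StepAt x y c) (ha : Aligned (y :: l) cs) : Aligned (x :: y :: l) (c :: cs)

namespace Aligned

lemma ne_nil {ps : List (ι → α)} {cs : List ι} (h : Aligned ps cs) : ps ≠ [] := by
  cases h <;> simp

lemma length_eq {ps : List (ι → α)} {cs : List ι} (h : Aligned ps cs) :
    cs.length + 1 = ps.length := by
  induction h with
  | single x => simp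
  | cons x c h ha ih => simpa using ih

lemma getElem {ps : List (ι → α)} {cs : List ι} (h : Aligned ps cs) :
    ∀ (i : ℕ) (hi : i + 1 < ps.length) (hi' : i < cs.length) (j : ι),
      ((ps[i]'(by omega)) j ≠ (ps[i + 1]'hi) j ↔ j = cs[i]'hi') := by
  induction h with
  | single x => intro i hi; simp at hi
  | cons x c h ha ih =>
    intro i hi hi' j
    match i with
    | 0 => simpa using h j
    | (i+1) =>
      have := ih i (by simpa using hi) (by simpa using hi') j
      simpa using this

lemma append {ps₁ ps₂ : List (ι → α)} {cs₁ cs₂ : List ι} {c : ι}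
    (h₁ : Aligned ps₁ cs₁) (h₂ : Aligned ps₂ cs₂)
    (hstep : StepAt (ps₁.getLast h₁.ne_nil) (ps₂.head h₂.ne_nil) c) :
    Aligned (ps₁ ++ ps₂) (cs₁ ++ c :: cs₂) := by
  induction h₁ with
  | single x =>
    cases h₂ with
    | single y => exact .cons _ _ (by simpa using hstep) (.single y)
    | cons y c' h' ha' => exact .cons _ _ (by simpa using hstep) (.cons _ _ h' ha')
  | cons x c' h ha ih =>
    exact .cons _ _ h (ih (by simpa using hstep))

lemma reverse {ps : List (ι → α)} {cs : List ι} (h : Aligned ps cs) :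
    Aligned ps.reverse cs.reverse := by
  induction h with
  | single x => simpa using Aligned.single x
  | cons x c h ha ih =>
    rename_i y l cs'
    have h2 : Aligned [x] [] := .single x
    have hb : StepAt (((y :: l).reverse).getLast ih.ne_nil) (([x]).head h2.ne_nil) c := by
      have : ((y :: l).reverse).getLast ih.ne_nil = y := by
        rw [List.getLast_reverse]; simp
      rw [this]
      exact h.symm
    have := ih.append h2 hb
    simpa using this

lemma map {ps : List (ι → α)} {cs : List ι} (h : Aligned ps cs)
    (θ : (ι → α) → (β → γ)) (δ : ι → β)
    (pres : ∀ x y c, StepAt x y c → StepAt (θ x) (θ y) (δ c)) :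
    Aligned (ps.map θ) (cs.map δ) := by
  induction h with
  | single x => simpa using Aligned.single (θ x)
  | cons x c h ha ih => exact .cons _ _ (pres _ _ _ h) ih

lemma ofRange (T : ℕ) (f : ℕ → (ι → α)) (c : ℕ → ι)
    (h : ∀ τ, τ < T → StepAt (f τ) (f (τ + 1)) (c τ)) :
    Aligned ((List.range (T + 1)).map f) ((List.range T).map c) := by
  induction T with
  | zero => simpa using Aligned.single (f 0)
  | succ T ih =>
    have h1 : Aligned ((List.range (T + 1)).map f) ((List.range T).map c) :=
      ih (fun τ hτ => h τ (by omega))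
    have h2 : Aligned [f (T + 1)] [] := .single _
    have := h1.append h2 (c := c T) (by
      have : ((List.range (T + 1)).map f).getLast h1.ne_nil = f T := by
        rw [List.getLast_eq_getElem]
        simp
      rw [this]
      simpa using h T (by omega))
    simpa [List.range_succ] using this

end Aligned


structure Seg (ι α : Type*) where
  ps : List (ι → α)
  cs : List ι
  bs : List (List ι)
  aligned : Aligned ps cs
  flat : bs.flatten = cs
  good : ∀ b ∈ bs, b ≠ [] ∧ b.Nodup

namespace Seg

variable (s s₁ s₂ : Seg ι α)

def head : ι → α := s.ps.head s.aligned.ne_nil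
def last : ι → α := s.ps.getLast s.aligned.ne_nil

lemma ps_ne_nil : s.ps ≠ [] := s.aligned.ne_nil

lemma cs_length : s.cs.length + 1 = s.ps.length := s.aligned.length_eq

/-- append two segments with a connecting step -/
def append (c : ι) (h : StepAt s₁.last s₂.head c) : Seg ι α where
  ps := s₁.ps ++ s₂.ps
  cs := s₁.cs ++ c :: s₂.cs
  bs := s₁.bs ++ [c] :: s₂.bs
  aligned := s₁.aligned.append s₂.aligned h
  flat := by simp [s₁.flat, s₂.flat]
  good := by
    intro b hb
    simp only [List.mem_append, List.mem_cons] at hb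
    rcases hb with h1 | h2 | h3
    · exact s₁.good b h1
    · subst h2; exact ⟨by simp, by simp⟩
    · exact s₂.good b h3

@[simp] lemma append_ps (c : ι) (h) : (s₁.append s₂ c h).ps = s₁.ps ++ s₂.ps := rfl

@[simp] lemma append_head (c : ι) (h) : (s₁.append s₂ c h).head = s₁.head := by
  simp [append, head, List.head_append_of_ne_nil, s₁.ps_ne_nil]

@[simp] lemma append_last (c : ι) (h) : (s₁.append s₂ c h).last = s₂.last := by
  simp [append, last, List.getLast_append_of_ne_nil, s₂.ps_ne_nil]

@[simp] lemma append_bs_length (c : ι) (h) :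
    (s₁.append s₂ c h).bs.length = s₁.bs.length + s₂.bs.length + 1 := by
  simp [append]; omega

@[simp] lemma append_ps_length (c : ι) (h) :
    (s₁.append s₂ c h).ps.length = s₁.ps.length + s₂.ps.length := by
  simp [append]

def reverse : Seg ι α where
  ps := s.ps.reverse
  cs := s.cs.reverse
  bs := (s.bs.map List.reverse).reverse
  aligned := s.aligned.reverse
  flat := by
    rw [← s.flat, ← List.reverse_flatten]
  good := by
    intro b hb
    simp only [List.mem_reverse, List.mem_map] at hb
    obtain ⟨a, ha, rfl⟩ := hb
    exact ⟨by simpa using (s.good a ha).1, by simpa using (s.good a ha).2⟩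

@[simp] lemma reverse_ps : s.reverse.ps = s.ps.reverse := rfl

@[simp] lemma reverse_head : s.reverse.head = s.last := by
  simp [reverse, head, last, List.head_reverse]

@[simp] lemma reverse_last : s.reverse.last = s.head := by
  simp [reverse, head, last, List.getLast_reverse]

@[simp] lemma reverse_ps_length : s.reverse.ps.length = s.ps.length := by simp [reverse]

@[simp] lemma reverse_bs_length : s.reverse.bs.length = s.bs.length := by simp [reverse]

def map (θ : (ι → α) → (β → γ)) (δ : ι → β)
    (pres : ∀ x y c, StepAt x y c → StepAt (θ x) (θ y) (δ c))
    (hδ : Function.Injective δ) : Seg β γ where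
  ps := s.ps.map θ
  cs := s.cs.map δ
  bs := s.bs.map (List.map δ)
  aligned := s.aligned.map θ δ pres
  flat := by rw [← List.map_flatten, s.flat]
  good := by
    intro b hb
    simp only [List.mem_map] at hb
    obtain ⟨a, ha, rfl⟩ := hb
    exact ⟨by simpa using (s.good a ha).1, ((s.good a ha).2).map hδ⟩

@[simp] lemma map_ps (θ : (ι → α) → (β → γ)) (δ : ι → β) (pres) (hδ) :
    (s.map θ δ pres hδ).ps = s.ps.map θ := rfl

@[simp] lemma map_head (θ : (ι → α) → (β → γ)) (δ : ι → β) (pres) (hδ) :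
    (s.map θ δ pres hδ).head = θ s.head := by
  simp [map, head, List.head_map]

@[simp] lemma map_last (θ : (ι → α) → (β → γ)) (δ : ι → β) (pres) (hδ) :
    (s.map θ δ pres hδ).last = θ s.last := by
  simp [map, last, List.getLast_map]

@[simp] lemma map_ps_length (θ : (ι → α) → (β → γ)) (δ : ι → β) (pres) (hδ) :
    (s.map θ δ pres hδ).ps.length = s.ps.length := by simp [map]

@[simp] lemma map_bs_length (θ : (ι → α) → (β → γ)) (δ : ι → β) (pres) (hδ) :
    (s.map θ δ pres hδ).bs.length = s.bs.length := by simp [map]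

end Seg

/-- Concatenate `T+1` segments along connecting steps. -/
lemma Seg.concat_exists (T : ℕ) (f : ℕ → Seg ι α) (c : ℕ → ι)
    (hb : ∀ v, v < T → StepAt (f v).last (f (v + 1)).head (c v)) :
    ∃ s : Seg ι α,
      s.head = (f 0).head ∧ s.last = (f T).last ∧
      (∀ v, v ≤ T → ∀ x ∈ (f v).ps, x ∈ s.ps) ∧
      s.ps.length = ∑ v ∈ Finset.range (T + 1), (f v).ps.length ∧
      s.bs.length = (∑ v ∈ Finset.range (T + 1), (f v).bs.length) + T := by
  induction T with
  | zero =>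
    exact ⟨f 0, rfl, rfl, by rintro v hv x hx; interval_cases v; exact hx, by simp, by simp⟩
  | succ T ih =>
    obtain ⟨s, hh, hl, hmem, hps, hbs⟩ := ih (fun v hv => hb v (by omega))
    refine ⟨s.append (f (T + 1)) (c T) (by rw [hl]; exact hb T (by omega)), ?_, ?_, ?_, ?_, ?_⟩
    · simp [hh]
    · simp
    · intro v hv x hx
      rcases Nat.lt_or_ge v (T + 1) with h | h
      · simp only [Seg.append_ps, List.mem_append]; exact Or.inl (hmem v (by omega) x hx)
      · have : v = T + 1 := by omega
        subst this
        simp only [Seg.append_ps, List.mem_append]; exact Or.inr hx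
    · rw [Seg.append_ps_length, hps, Finset.sum_range_succ (n := T + 1)]
    · rw [Seg.append_bs_length, hbs, Finset.sum_range_succ (n := T + 1)]; omega


section Gray

variable {m : ℕ}

lemma snoc_stepAt {j : ℕ} {x y : Fin j → ZMod m} {c : Fin j} (w : ZMod m)
    (h : StepAt x y c) :
    StepAt (Fin.snoc x w) (Fin.snoc y w) (Fin.castSucc c) := by
  intro i
  refine Fin.lastCases ?_ (fun i' => ?_) i
  · simp [Fin.snoc_last, (Fin.castSucc_lt_last c).ne']
  · simp only [Fin.snoc_castSucc]
    rw [h i']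
    constructor
    · rintro rfl; rfl
    · intro hh; exact Fin.castSucc_injective _ hh

lemma snoc_stepAt_last {j : ℕ} (B : Fin j → ZMod m) {a b : ZMod m} (hab : a ≠ b) :
    StepAt (Fin.snoc B a) (Fin.snoc B b) (Fin.last j) := by
  intro i
  refine Fin.lastCases ?_ (fun i' => ?_) i
  · simp [Fin.snoc_last, hab]
  · simp [Fin.snoc_castSucc, (Fin.castSucc_lt_last i').ne]

lemma gray_exists (hm : 2 ≤ m) : ∀ j : ℕ, ∃ s : Seg (Fin j) (ZMod m),
    (∀ f : Fin j → ZMod m, f ∈ s.ps) ∧ s.ps.length = m ^ j := by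
  haveI : NeZero m := ⟨by omega⟩
  intro j
  induction j with
  | zero =>
    refine ⟨⟨[fun i => i.elim0], [], [], Aligned.single _, rfl, by simp⟩, ?_, by simp⟩
    intro f
    have : f = fun i => i.elim0 := by funext i; exact i.elim0
    simp [this]
  | succ j ih =>
    obtain ⟨s, hcov, hlen⟩ := ih
    set F : ℕ → Seg (Fin (j + 1)) (ZMod m) := fun v =>
      (if v % 2 = 1 then s.reverse else s).map
        (fun x => Fin.snoc x ((v : ℕ) : ZMod m)) Fin.castSucc
        (fun x y c h => snoc_stepAt _ h) (Fin.castSucc_injective _) with hF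
    have hb : ∀ v, v < m - 1 → StepAt (F v).last (F (v + 1)).head (Fin.last j) := by
      intro v hv
      have hne : ((v : ℕ) : ZMod m) ≠ (((v + 1 : ℕ)) : ZMod m) := by
        intro hh
        have h1 : ((v : ℕ) : ZMod m).val = v := ZMod.val_cast_of_lt (by omega)
        have h2 : (((v + 1 : ℕ)) : ZMod m).val = v + 1 := ZMod.val_cast_of_lt (by omega)
        rw [hh] at h1; omega
      rcases Nat.mod_two_eq_zero_or_one v with he | ho
      · simp only [hF, Seg.map_last, Seg.map_head]
        rw [if_neg (by omega : ¬ v % 2 = 1), if_pos (by omega : (v + 1) % 2 = 1)]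
        simp only [Seg.reverse_head]
        exact snoc_stepAt_last _ hne
      · simp only [hF, Seg.map_last, Seg.map_head]
        rw [if_pos ho, if_neg (by omega : ¬ (v + 1) % 2 = 1)]
        simp only [Seg.reverse_last]
        exact snoc_stepAt_last _ hne
    obtain ⟨s', hh, hl, hmem, hps, _⟩ :=
      Seg.concat_exists (m - 1) F (fun _ => Fin.last j) hb
    refine ⟨s', ?_, ?_⟩
    · intro f
      set v : ℕ := (f (Fin.last j)).val with hv
      have hvlt : v < m := ZMod.val_lt _
      have hbase : Fin.init f ∈ ((if v % 2 = 1 then s.reverse else s) : Seg _ _).ps := by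
        split
        · simpa [Seg.reverse] using hcov (Fin.init f)
        · exact hcov (Fin.init f)
      have : f ∈ (F v).ps := by
        simp only [hF, Seg.map_ps, List.mem_map]
        refine ⟨Fin.init f, hbase, ?_⟩
        have : ((v : ℕ) : ZMod m) = f (Fin.last j) := by
          rw [hv, ZMod.natCast_val, ZMod.cast_id]
        rw [this, Fin.snoc_init_self]
      exact hmem v (by omega) f this
    · rw [hps]
      have : ∀ v ∈ Finset.range (m - 1 + 1), (F v).ps.length = m ^ j := by
        intro v _
        simp only [hF, Seg.map_ps_length]
        split <;> simp [hlen]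
      rw [Finset.sum_congr rfl this]
      simp only [Finset.sum_const, Finset.card_range, smul_eq_mul]
      have : m - 1 + 1 = m := by omega
      rw [this, pow_succ, mul_comm]

end Gray


section Fast

variable {m e : ℕ}

/-- generic step-to-update lemma -/
lemma stepAt_update {ι α : Type*} [DecidableEq ι] (x : ι → α) (j : ι) (v : α) (h : x j ≠ v) :
    StepAt x (Function.update x j v) j := by
  intro i
  rcases eq_or_ne i j with rfl | hij
  · simp [Function.update, h]
  · simp [Function.update, hij]

lemma stepAt_ite {ι α : Type*} [DecidableEq ι] (x : ι → α) (j : ι) (v : α) (h : x j ≠ v) :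
    StepAt x (fun i => if i = j then v else x i) j := by
  intro i
  rcases eq_or_ne i j with rfl | hij
  · simp [h]
  · simp [hij]

lemma cast_ne_cast {a b : ℕ} (ha : a < m) (hb : b < m) (h : a ≠ b) :
    ((a : ℕ) : ZMod m) ≠ ((b : ℕ) : ZMod m) := by
  intro hh
  apply h
  have := congrArg ZMod.val hh
  rwa [ZMod.val_cast_of_lt ha, ZMod.val_cast_of_lt hb] at this

/-- the shift value `g = k+1` -/
def gv (m e : ℕ) : ZMod m := ((e + 3 : ℕ) : ZMod m)

lemma gv_ne_zero (hm : e + 3 < m) : gv m e ≠ 0 := by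
  have : ((0 : ℕ) : ZMod m) = 0 := by simp
  rw [gv, ← this]
  exact cast_ne_cast hm (by omega) (by omega)

def rho (m e : ℕ) (W : Fin e → ZMod m) : ℕ :=
  ((e + 2) - (∑ j, (W j).val) % (e + 2)) % (e + 2)

lemma rho_lt (W : Fin e → ZMod m) : rho m e W < e + 2 := Nat.mod_lt _ (by omega)

lemma rho_cast (W : Fin e → ZMod m) :
    ((rho m e W : ℕ) : ZMod (e + 2)) = - ∑ j, (((W j).val : ℕ) : ZMod (e + 2)) := by
  unfold rho
  rw [ZMod.natCast_mod, Nat.cast_sub (le_of_lt (Nat.mod_lt _ (by omega))), ZMod.natCast_mod]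
  rw [Nat.cast_sum]
  simp

def Sf (W : Fin e → ZMod m) (t : ℕ) : Fin (e + 2) → ZMod m := fun j =>
  if h0 : (j : ℕ) = 0 then 0
  else if h1 : (j : ℕ) ≤ e then W ⟨(j : ℕ) - 1, by omega⟩
  else (((e + 2) * t + rho m e W : ℕ) : ZMod m)

def sg (W : Fin e → ZMod m) (t τ : ℕ) : Fin (e + 2) → ZMod m := fun j =>
  Sf W t j - gv m e * (((τ / (e + 2) : ℕ) : ZMod m) + if (j : ℕ) < τ % (e + 2) then 1 else 0)

lemma sg_zero (W : Fin e → ZMod m) (t : ℕ) : sg W t 0 = Sf W t := by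
  funext j
  simp [sg]

lemma sg_top (W : Fin e → ZMod m) (t : ℕ) : sg W t (m * (e + 2)) = Sf W t := by
  funext j
  have h1 : (m * (e + 2)) / (e + 2) = m := Nat.mul_div_cancel m (by omega)
  have h2 : (m * (e + 2)) % (e + 2) = 0 := Nat.mul_mod_left m (e + 2)
  simp [sg, h1, h2, ZMod.natCast_self]

lemma sg_succ (W : Fin e → ZMod m) (t τ : ℕ) (j : Fin (e + 2)) :
    sg W t (τ + 1) j = sg W t τ j - gv m e * (if (j : ℕ) = τ % (e + 2) then 1 else 0) := by
  have hk0 : 0 < e + 2 := by omega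
  have hdm : (e + 2) * (τ / (e + 2)) + τ % (e + 2) = τ := Nat.div_add_mod τ (e + 2)
  have hbl : τ % (e + 2) < e + 2 := Nat.mod_lt _ hk0
  have hjl : (j : ℕ) < e + 2 := j.isLt
  have key : τ + 1 = (τ % (e + 2) + 1) + (e + 2) * (τ / (e + 2)) := by omega
  rcases Nat.lt_or_ge (τ % (e + 2) + 1) (e + 2) with hlt | hge
  · have h1 : (τ + 1) % (e + 2) = τ % (e + 2) + 1 := by
      rw [key, Nat.add_mul_mod_self_left, Nat.mod_eq_of_lt hlt]
    have h2 : (τ + 1) / (e + 2) = τ / (e + 2) := by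
      rw [key, Nat.add_mul_div_left _ _ hk0, Nat.div_eq_of_lt hlt, Nat.zero_add]
    simp only [sg, h1, h2]
    by_cases hj : (j : ℕ) < τ % (e + 2)
    · rw [if_pos (by omega), if_pos hj, if_neg (by omega)]; ring
    · by_cases hj2 : (j : ℕ) = τ % (e + 2)
      · rw [if_pos (by omega), if_neg hj, if_pos hj2]; ring
      · rw [if_neg (by omega), if_neg hj, if_neg hj2]; ring
  · have hke : τ % (e + 2) + 1 = e + 2 := by omega
    have h1 : (τ + 1) % (e + 2) = 0 := by
      rw [key, Nat.add_mul_mod_self_left, hke, Nat.mod_self]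
    have h2 : (τ + 1) / (e + 2) = τ / (e + 2) + 1 := by
      rw [key, Nat.add_mul_div_left _ _ hk0, hke, Nat.div_self hk0]; ring
    simp only [sg, h1, h2]
    by_cases hj2 : (j : ℕ) = τ % (e + 2)
    · rw [if_neg (by omega), if_neg (by omega), if_pos hj2]
      push_cast; ring
    · rw [if_neg (by omega), if_pos (by omega), if_neg hj2]
      push_cast; ring

lemma sg_stepAt (hm : e + 3 < m) (W : Fin e → ZMod m) (t τ : ℕ) :
    StepAt (sg W t τ) (sg W t (τ + 1))
      (⟨τ % (e + 2), Nat.mod_lt _ (by omega)⟩ : Fin (e + 2)) := by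
  intro j
  rw [sg_succ W t τ j]
  by_cases hj : (j : ℕ) = τ % (e + 2)
  · have hj' : j = (⟨τ % (e + 2), Nat.mod_lt _ (by omega)⟩ : Fin (e + 2)) := Fin.ext hj
    rw [if_pos hj, mul_one]
    simp only [hj', iff_true]
    intro hh
    have : gv m e = 0 := by
      have := sub_eq_self.mp hh.symm
      exact this
    exact gv_ne_zero hm this
  · rw [if_neg hj, mul_zero, sub_zero]
    constructor
    · intro h; exact absurd rfl h
    · intro h
      exfalso
      apply hj
      rw [h]

def dirf (e : ℕ) : ℕ → Fin (e + 2) := fun τ => ⟨τ % (e + 2), Nat.mod_lt _ (by omega)⟩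

lemma flatten_dirf (M : ℕ) :
    ((List.range M).map (fun _ => (List.range (e + 2)).map (dirf e))).flatten
      = (List.range (M * (e + 2))).map (dirf e) := by
  induction M with
  | zero => simp
  | succ M ih =>
    rw [List.range_succ (n := M), List.map_append, List.flatten_append, ih]
    rw [show (M + 1) * (e + 2) = M * (e + 2) + (e + 2) by ring, List.range_add (n := M * (e + 2)) (m := e + 2), List.map_append]
    simp only [List.map_cons, List.map_nil, List.flatten_cons, List.flatten_nil, List.append_nil]
    congr 1
    rw [List.map_map]
    apply List.map_congr_left
    intro x hx
    show dirf e x = dirf e (M * (e + 2) + x)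
    unfold dirf
    congr 1
    conv_rhs => rw [Nat.add_comm, Nat.add_mul_mod_self_right]

lemma core_exists (hm : e + 3 < m) (W : Fin e → ZMod m) (t : ℕ) :
    ∃ s : Seg (Fin (e + 2)) (ZMod m),
      s.head = Sf W t ∧ s.last = Sf W t ∧
      (∀ τ, τ < m * (e + 2) + 1 → sg W t τ ∈ s.ps) ∧
      s.ps.length = m * (e + 2) + 1 ∧ s.bs.length = m := by
  refine ⟨⟨(List.range (m * (e + 2) + 1)).map (sg W t),
          (List.range (m * (e + 2))).map (dirf e),
          (List.range m).map (fun _ => (List.range (e + 2)).map (dirf e)),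
          ?_, flatten_dirf m, ?_⟩, ?_, ?_, ?_, ?_, ?_⟩
  · exact Aligned.ofRange _ _ _ (fun τ _ => sg_stepAt hm W t τ)
  · intro b hb
    simp only [List.mem_map] at hb
    obtain ⟨a, _, rfl⟩ := hb
    constructor
    · have hlen : ((List.range (e + 2)).map (dirf e)).length = e + 2 := by simp
      intro hh
      rw [hh] at hlen
      simp at hlen
    · refine List.Nodup.map_on ?_ List.nodup_range
      intro a ha b hb hab
      simp only [List.mem_range] at ha hb
      have := congrArg Fin.val hab
      simpa [dirf, Nat.mod_eq_of_lt ha, Nat.mod_eq_of_lt hb] using this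
  · show (((List.range (m * (e + 2) + 1)).map (sg W t)).head _) = Sf W t
    rw [List.head_eq_getElem, List.getElem_map]
    simp only [List.getElem_range]
    exact sg_zero W t
  · show (((List.range (m * (e + 2) + 1)).map (sg W t)).getLast _) = Sf W t
    rw [List.getLast_eq_getElem, List.getElem_map]
    simp only [List.length_map, List.length_range, Nat.add_sub_cancel, List.getElem_range]
    exact sg_top W t
  · intro τ hτ
    simp only [List.mem_map, List.mem_range]
    exact ⟨τ, hτ, rfl⟩
  · simp
  · simp

lemma Sf_step (hdvd : (e + 2) ∣ m) (W : Fin e → ZMod m) (t : ℕ)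
    (ht : t + 1 < m / (e + 2)) :
    StepAt (Sf W t) (Sf W (t + 1)) (Fin.last (e + 1)) := by
  have hkR : (e + 2) * (m / (e + 2)) = m := Nat.mul_div_cancel' hdvd
  have hlastval : ((Fin.last (e + 1) : Fin (e + 2)) : ℕ) = e + 1 := rfl
  intro j
  by_cases h0 : (j : ℕ) = 0
  · have hne : j ≠ Fin.last (e + 1) := by
      intro hh; rw [hh] at h0; simp [hlastval] at h0
    simp only [Sf, dif_pos h0]
    simp [hne]
  · by_cases h1 : (j : ℕ) ≤ e
    · have hne : j ≠ Fin.last (e + 1) := by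
        intro hh
        rw [hh, hlastval] at h1
        omega
      simp only [Sf, dif_neg h0, dif_pos h1]
      simp [hne]
    · have hj : j = Fin.last (e + 1) := by
        have := j.isLt
        apply Fin.ext
        rw [hlastval]; omega
      subst hj
      simp only [Sf, dif_neg h0, dif_neg h1]
      have hb1 : (e + 2) * t + rho m e W < m := by
        have h3 : (e + 2) * (t + 1) ≤ m := by
          calc (e + 2) * (t + 1) ≤ (e + 2) * (m / (e + 2)) := by
                apply Nat.mul_le_mul_left; omega
            _ = m := hkR
        have := rho_lt (m := m) W
        nlinarith [rho_lt (m := m) W]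
      have hb2 : (e + 2) * (t + 1) + rho m e W < m := by
        have h3 : (e + 2) * (t + 2) ≤ m := by
          calc (e + 2) * (t + 2) ≤ (e + 2) * (m / (e + 2)) := by
                apply Nat.mul_le_mul_left; omega
            _ = m := hkR
        nlinarith [rho_lt (m := m) W]
      have hne : (((e + 2) * t + rho m e W : ℕ) : ZMod m)
          ≠ (((e + 2) * (t + 1) + rho m e W : ℕ) : ZMod m) := by
        apply cast_ne_cast hb1 hb2
        nlinarith
      constructor
      · intro _
        trivial
      · intro _
        exact hne

lemma row_exists (hm4 : 4 * (e + 2) < m) (hdvd : (e + 2) ∣ m) (W : Fin e → ZMod m) :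
    ∃ s : Seg (Fin (e + 2)) (ZMod m),
      s.head = Sf W 0 ∧ s.last = Sf W (m / (e + 2) - 1) ∧
      (∀ t, t < m / (e + 2) → ∀ τ, τ < m * (e + 2) + 1 → sg W t τ ∈ s.ps) ∧
      s.ps.length = (m / (e + 2)) * (m * (e + 2) + 1) ∧
      s.bs.length = (m / (e + 2)) * m + (m / (e + 2) - 1) := by
  have hm : e + 3 < m := by omega
  have hR : 1 ≤ m / (e + 2) := by
    apply Nat.one_le_div_iff (by omega) |>.mpr
    omega
  choose seg hhead hlast hmem hps hbs using core_exists hm W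
  have hb : ∀ v, v < m / (e + 2) - 1 →
      StepAt (seg v).last (seg (v + 1)).head (Fin.last (e + 1)) := by
    intro v hv
    rw [hlast v, hhead (v + 1)]
    exact Sf_step hdvd W v (by omega)
  obtain ⟨s, hh, hl, hm', hps', hbs'⟩ :=
    Seg.concat_exists (m / (e + 2) - 1) seg (fun _ => Fin.last (e + 1)) hb
  have hRR : m / (e + 2) - 1 + 1 = m / (e + 2) := by omega
  refine ⟨s, ?_, ?_, ?_, ?_, ?_⟩
  · rw [hh, hhead]
  · rw [hl, hlast]
  · intro t ht τ hτ
    exact hm' t (by omega) _ (hmem t τ hτ)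
  · rw [hps', Finset.sum_congr rfl (fun v _ => hps v)]
    simp [hRR]
  · rw [hbs', Finset.sum_congr rfl (fun v _ => hbs v)]
    simp [hRR]


lemma Sf_lastval (W : Fin e → ZMod m) (t : ℕ) :
    Sf W t (Fin.last (e + 1)) = (((e + 2) * t + rho m e W : ℕ) : ZMod m) := by
  have h : ((Fin.last (e + 1) : Fin (e + 2)) : ℕ) = e + 1 := rfl
  rw [Sf, dif_neg (by omega), dif_neg (by omega)]

lemma Sf_midval (W : Fin e → ZMod m) (t : ℕ) (j : Fin (e + 2)) (h0 : ¬ (j : ℕ) = 0)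
    (h1 : (j : ℕ) ≤ e) : Sf W t j = W ⟨(j : ℕ) - 1, by omega⟩ := by
  rw [Sf, dif_neg h0, dif_pos h1]

def Zel1 (m e : ℕ) (x y : Fin e → ZMod m) (t : ℕ) : Fin (e + 2) → ZMod m :=
  fun jj => if jj = Fin.last (e + 1) then (((rho m e y + (e + 2) : ℕ)) : ZMod m) else Sf x t jj

def Zel2 (m e : ℕ) (x y : Fin e → ZMod m) (c : Fin e) (t : ℕ) : Fin (e + 2) → ZMod m :=
  fun jj => if jj = (⟨(c : ℕ) + 1, by omega⟩ : Fin (e + 2)) then y c else Zel1 m e x y t jj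

lemma jl_ne_j0 {c : Fin e} : (⟨(c : ℕ) + 1, by omega⟩ : Fin (e + 2)) ≠ Fin.last (e + 1) := by
  intro hh
  have h1 := congrArg Fin.val hh
  have h2 : ((Fin.last (e + 1) : Fin (e + 2)) : ℕ) = e + 1 := rfl
  rw [h2] at h1
  have := c.isLt
  simp only at h1
  omega

lemma zel_st1 (hm4 : 4 * (e + 2) < m) (hdvd : (e + 2) ∣ m) (x y : Fin e → ZMod m) :
    StepAt (Sf x (m / (e + 2) - 1)) (Zel1 m e x y (m / (e + 2) - 1)) (Fin.last (e + 1)) := by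
  have hkR : (e + 2) * (m / (e + 2)) = m := Nat.mul_div_cancel' hdvd
  have hR : 2 ≤ m / (e + 2) := by
    by_contra hcon
    have : m / (e + 2) ≤ 1 := by omega
    have := Nat.mul_le_mul_left (e + 2) this
    omega
  have hRm : (e + 2) * (m / (e + 2) - 1) + (e + 2) = m := by
    have h1 : m / (e + 2) - 1 + 1 = m / (e + 2) := by omega
    calc (e + 2) * (m / (e + 2) - 1) + (e + 2) = (e + 2) * (m / (e + 2) - 1 + 1) := by ring
      _ = m := by rw [h1, hkR]
  have hXne : Sf x (m / (e + 2) - 1) (Fin.last (e + 1))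
      ≠ (((rho m e y + (e + 2) : ℕ)) : ZMod m) := by
    rw [Sf_lastval]
    apply cast_ne_cast
    · have := rho_lt (m := m) x; omega
    · have := rho_lt (m := m) y; omega
    · have := rho_lt (m := m) x
      have := rho_lt (m := m) y
      omega
  exact stepAt_ite _ _ _ hXne

lemma zel_st2 (x y : Fin e → ZMod m) (c : Fin e) (hxy : x c ≠ y c) (t : ℕ) :
    StepAt (Zel1 m e x y t) (Zel2 m e x y c t) (⟨(c : ℕ) + 1, by omega⟩ : Fin (e + 2)) := by
  have h1 : Zel1 m e x y t (⟨(c : ℕ) + 1, by omega⟩ : Fin (e + 2)) = x c := by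
    rw [Zel1, if_neg jl_ne_j0]
    rw [Sf_midval x t _ (by simp) (by have := c.isLt; simp only; omega)]
    congr 1
    all_goals (apply Fin.ext; show ((c : ℕ) + 1) - 1 = (c : ℕ); omega)
  have := stepAt_ite (Zel1 m e x y t) (⟨(c : ℕ) + 1, by omega⟩ : Fin (e + 2)) (y c)
    (by rw [h1]; exact hxy)
  exact this

lemma zel_st3 (hm4 : 4 * (e + 2) < m) (x y : Fin e → ZMod m) (c : Fin e)
    (hstep : StepAt x y c) (t : ℕ) :
    StepAt (Zel2 m e x y c t) (Sf y 0) (Fin.last (e + 1)) := by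
  set j0 : Fin (e + 2) := (⟨(c : ℕ) + 1, by omega⟩ : Fin (e + 2)) with hj0
  have hj0v : (j0 : ℕ) = (c : ℕ) + 1 := rfl
  have hjlv : ((Fin.last (e + 1) : Fin (e + 2)) : ℕ) = e + 1 := rfl
  intro i
  by_cases h0 : (i : ℕ) = 0
  · have hij0 : i ≠ j0 := by
      intro hh; rw [hh, hj0v] at h0; omega
    have hijl : i ≠ Fin.last (e + 1) := by
      intro hh; rw [hh, hjlv] at h0; omega
    have hv1 : Zel2 m e x y c t i = Sf x t i := by
      rw [Zel2, if_neg hij0, Zel1, if_neg hijl]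
    have hx0 : Sf x t i = 0 := by rw [Sf, dif_pos h0]
    have hy0 : Sf y 0 i = 0 := by rw [Sf, dif_pos h0]
    rw [hv1, hx0, hy0]
    simp [hijl]
  · by_cases h1 : (i : ℕ) ≤ e
    · have hijl : i ≠ Fin.last (e + 1) := by
        intro hh; rw [hh, hjlv] at h1; omega
      by_cases hcc : i = j0
      · have hv1 : Zel2 m e x y c t i = y c := by rw [Zel2, if_pos hcc]
        have hiv : (i : ℕ) = (c : ℕ) + 1 := by rw [hcc]
        have hv2 : Sf y 0 i = y c := by
          rw [Sf_midval y 0 i h0 h1]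
          congr 1
          apply Fin.ext
          show (i : ℕ) - 1 = (c : ℕ)
          omega
        rw [hv1, hv2]
        simp [hijl]
      · have hv1 : Zel2 m e x y c t i = Sf x t i := by
          rw [Zel2, if_neg hcc, Zel1, if_neg hijl]
        have hxv : Sf x t i = x ⟨(i : ℕ) - 1, by omega⟩ := Sf_midval x t i h0 h1
        have hyv : Sf y 0 i = y ⟨(i : ℕ) - 1, by omega⟩ := Sf_midval y 0 i h0 h1
        have hpc : (⟨(i : ℕ) - 1, by omega⟩ : Fin e) ≠ c := by
          intro hh
          apply hcc
          apply Fin.ext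
          have hval := congrArg Fin.val hh
          simp only at hval
          show (i : ℕ) = (j0 : ℕ)
          rw [hj0v]
          omega
        have heq : x (⟨(i : ℕ) - 1, by omega⟩ : Fin e) = y (⟨(i : ℕ) - 1, by omega⟩ : Fin e) := by
          by_contra hne
          exact hpc ((hstep _).mp hne)
        rw [hv1, hxv, hyv, heq]
        simp [hijl]
    · have hie : i = Fin.last (e + 1) := by
        apply Fin.ext
        show (i : ℕ) = e + 1
        have := i.isLt
        omega
      have hij0 : i ≠ j0 := by rw [hie]; exact (jl_ne_j0).symm
      have hv1 : Zel2 m e x y c t i = (((rho m e y + (e + 2) : ℕ)) : ZMod m) := by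
        rw [Zel2, if_neg hij0, Zel1, if_pos hie]
      have hv2 : Sf y 0 i = (((e + 2) * 0 + rho m e y : ℕ) : ZMod m) := by
        rw [hie]; exact Sf_lastval y 0
      have hne2 : (((rho m e y + (e + 2) : ℕ)) : ZMod m)
          ≠ (((e + 2) * 0 + rho m e y : ℕ) : ZMod m) := by
        apply cast_ne_cast
        · have := rho_lt (m := m) y; omega
        · have := rho_lt (m := m) y; omega
        · omega
      rw [hv1, hv2]
      constructor
      · intro _; exact hie
      · intro _; exact hne2

lemma chain_exists (hm4 : 4 * (e + 2) < m) (hdvd : (e + 2) ∣ m)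
    {Ws : List (Fin e → ZMod m)} {csW : List (Fin e)} (h : Aligned Ws csW) :
    ∃ s : Seg (Fin (e + 2)) (ZMod m),
      s.head = Sf (Ws.head h.ne_nil) 0 ∧
      s.last = Sf (Ws.getLast h.ne_nil) (m / (e + 2) - 1) ∧
      (∀ W ∈ Ws, ∀ t, t < m / (e + 2) → ∀ τ, τ < m * (e + 2) + 1 → sg W t τ ∈ s.ps) ∧
      s.ps.length ≤ Ws.length * ((m / (e + 2)) * (m * (e + 2) + 1) + 2) ∧
      s.bs.length ≤ Ws.length * ((m / (e + 2)) * m + (m / (e + 2)) + 3) := by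
  induction h with
  | single W =>
    obtain ⟨s, h1, h2, h3, h4, h5⟩ := row_exists hm4 hdvd W
    set R := m / (e + 2) with hRdef
    refine ⟨s, by simpa using h1, by simpa using h2, ?_, ?_, ?_⟩
    · intro W' hW' t ht τ hτ
      simp only [List.mem_singleton] at hW'
      subst hW'
      exact h3 t ht τ hτ
    · simp only [List.length_singleton, Nat.one_mul]
      omega
    · simp only [List.length_singleton, Nat.one_mul]
      have hR1 : 1 ≤ R := by
        rw [hRdef]
        apply Nat.one_le_div_iff (by omega) |>.mpr
        omega
      omega
  | cons x c hstep ha ih =>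
    rename_i y l cs'
    obtain ⟨s', h'h, h'l, h'm, h'ps, h'bs⟩ := ih
    obtain ⟨sr, hrh, hrl, hrm, hrps, hrbs⟩ := row_exists hm4 hdvd x
    set R := m / (e + 2) with hRdef
    have hR1 : 1 ≤ R := by
      rw [hRdef]
      apply Nat.one_le_div_iff (by omega) |>.mpr
      omega
    have st2 : StepAt (Zel1 m e x y (m / (e + 2) - 1))
        (Zel2 m e x y c (m / (e + 2) - 1)) (⟨(c : ℕ) + 1, by omega⟩ : Fin (e + 2)) :=
      zel_st2 x y c ((hstep c).mpr rfl) _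
    set mid : Seg (Fin (e + 2)) (ZMod m) :=
      ⟨[Zel1 m e x y (m / (e + 2) - 1), Zel2 m e x y c (m / (e + 2) - 1)],
        [(⟨(c : ℕ) + 1, by omega⟩ : Fin (e + 2))],
        [[(⟨(c : ℕ) + 1, by omega⟩ : Fin (e + 2))]],
        Aligned.cons _ _ st2 (Aligned.single _), by simp, by simp⟩ with hmid
    have hmidhead : mid.head = Zel1 m e x y (m / (e + 2) - 1) := rfl
    have hmidlast : mid.last = Zel2 m e x y c (m / (e + 2) - 1) := rfl
    have hstep1 : StepAt sr.last mid.head (Fin.last (e + 1)) := by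
      rw [hrl, hmidhead]
      exact zel_st1 hm4 hdvd x y
    have hstep2 : StepAt (sr.append mid _ hstep1).last s'.head (Fin.last (e + 1)) := by
      rw [Seg.append_last, hmidlast, h'h]
      show StepAt (Zel2 m e x y c (m / (e + 2) - 1)) (Sf y 0) (Fin.last (e + 1))
      exact zel_st3 hm4 x y c hstep _
    refine ⟨(sr.append mid _ hstep1).append s' _ hstep2, ?_, ?_, ?_, ?_, ?_⟩
    · rw [Seg.append_head, Seg.append_head, hrh]
      rfl
    · rw [Seg.append_last, h'l]
      all_goals exact congrArg (fun z => Sf z (R - 1)) (List.getLast_cons (by simp)).symm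
    · intro W hW t ht τ hτ
      simp only [List.mem_cons] at hW
      simp only [Seg.append_ps, List.mem_append]
      rcases hW with hh | hW
      · subst hh
        exact Or.inl (Or.inl (hrm t ht τ hτ))
      · exact Or.inr (h'm W (by simpa using hW) t ht τ hτ)
    · simp only [Seg.append_ps_length]
      have hml : mid.ps.length = 2 := rfl
      rw [hml, hrps]
      have hll : (x :: y :: l).length = (y :: l).length + 1 := rfl
      rw [hll, Nat.succ_mul]
      omega
    · simp only [Seg.append_bs_length]
      have hml : mid.bs.length = 1 := rfl
      rw [hml, hrbs]
      have hll : (x :: y :: l).length = (y :: l).length + 1 := rfl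
      rw [hll, Nat.succ_mul]
      omega

lemma decode (hm4 : 4 * (e + 2) < m) (hdvd : (e + 2) ∣ m)
    (hcop : Nat.Coprime (e + 3) m) (x : Fin (e + 2) → ZMod m) :
    ∃ (W : Fin e → ZMod m) (t τ : ℕ),
      t < m / (e + 2) ∧ τ < m * (e + 2) + 1 ∧ sg W t τ = x := by
  haveI : NeZero m := ⟨by omega⟩
  haveI : NeZero (e + 2) := ⟨by omega⟩
  set ψ : ZMod m →+* ZMod (e + 2) := ZMod.castHom hdvd (ZMod (e + 2)) with hψ
  have ψval : ∀ z : ZMod m, ψ z = ((z.val : ℕ) : ZMod (e + 2)) := by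
    intro z
    rw [hψ, ZMod.castHom_apply, ← ZMod.natCast_val]
  have ψg : ψ (gv m e) = 1 := by
    rw [hψ, gv, map_natCast]
    have h1 : ((e + 3 : ℕ) : ZMod (e + 2)) = ((e + 2 : ℕ) : ZMod (e + 2)) + 1 := by
      push_cast; ring
    rw [h1, ZMod.natCast_self, zero_add]
  set u : (ZMod m)ˣ := ZMod.unitOfCoprime (e + 3) hcop with hudef
  have hu : (u : ZMod m) = gv m e := ZMod.coe_unitOfCoprime _ _
  set csum : ZMod (e + 2) := ∑ j, ψ (x j) with hcsum
  set c : ℕ := (-csum).val with hc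
  have hck : c < e + 2 := ZMod.val_lt _
  set j0' : Fin (e + 2) := ⟨0, by omega⟩ with hj0'
  set i : ℕ := ((- x j0') * ((u⁻¹ : (ZMod m)ˣ) : ZMod m)
      - (if 0 < c then 1 else 0)).val with hi
  have him : i < m := ZMod.val_lt _
  set S' : Fin (e + 2) → ZMod m :=
    fun j => x j + gv m e * (((i : ℕ) : ZMod m) + if (j : ℕ) < c then 1 else 0) with hS'
  set W : Fin e → ZMod m := fun j' => S' ⟨(j' : ℕ) + 1, by omega⟩ with hW
  set vl : ℕ := (S' (Fin.last (e + 1))).val with hvl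
  have hiZ : ((i : ℕ) : ZMod m)
      = (- x j0') * ((u⁻¹ : (ZMod m)ˣ) : ZMod m) - (if 0 < c then 1 else 0) := by
    rw [hi, ZMod.natCast_val, ZMod.cast_id]
  have hS0 : S' j0' = 0 := by
    have hj0c : ¬ ((j0' : ℕ) < c) ∨ (0 < c) := by
      by_cases hcc : 0 < c
      · exact Or.inr hcc
      · exact Or.inl (by omega)
    rw [hS', hiZ]
    simp only
    have huu : (↑u : ZMod m) * (↑u⁻¹ : ZMod m) = 1 := u.mul_inv
    have hj0v' : ((j0' : Fin (e + 2)) : ℕ) = 0 := rfl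
    have hite : (if ((j0' : Fin (e+2)) : ℕ) < c then (1 : ZMod m) else 0)
        = (if 0 < c then (1 : ZMod m) else 0) := by rw [hj0v']
    rw [hite, ← hu]
    calc x j0' + ↑u * ((- x j0') * ↑u⁻¹ - (if 0 < c then (1:ZMod m) else 0)
            + (if 0 < c then (1:ZMod m) else 0))
        = x j0' + (- x j0') * (↑u * ↑u⁻¹) := by ring
      _ = 0 := by rw [huu]; ring
  have hsum : ∑ j, ψ (S' j) = 0 := by
    have h1 : ∀ j : Fin (e + 2), ψ (S' j)
        = ψ (x j) + (((i : ℕ) : ZMod (e + 2)) + if (j : ℕ) < c then 1 else 0) := by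
      intro j
      rw [hS']
      simp only
      rw [map_add, map_mul, ψg, one_mul, map_add, map_natCast, apply_ite ψ, map_one, map_zero]
    rw [Finset.sum_congr rfl (fun j _ => h1 j)]
    rw [Finset.sum_add_distrib, Finset.sum_add_distrib]
    have h2 : ∑ _j : Fin (e + 2), ((i : ℕ) : ZMod (e + 2)) = 0 := by
      rw [Finset.sum_const]
      simp only [Finset.card_univ, Fintype.card_fin, nsmul_eq_mul]
      rw [show ((e + 2 : ℕ) : ZMod (e + 2)) * ((i : ℕ) : ZMod (e + 2)) = 0 from by
        rw [ZMod.natCast_self, zero_mul]]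
    have h3 : ∑ j : Fin (e + 2), (if (j : ℕ) < c then (1 : ZMod (e + 2)) else 0)
        = ((c : ℕ) : ZMod (e + 2)) := by
      rw [Fin.sum_univ_eq_sum_range (fun j => if j < c then (1 : ZMod (e + 2)) else 0) (e + 2)]
      rw [Finset.sum_boole]
      have : (Finset.range (e + 2)).filter (fun j => j < c) = Finset.range c := by
        ext a
        simp only [Finset.mem_filter, Finset.mem_range]
        omega
      rw [this, Finset.card_range]
    rw [h2, h3, ← hcsum]
    have h4 : ((c : ℕ) : ZMod (e + 2)) = -csum := by
      rw [hc, ZMod.natCast_val, ZMod.cast_id]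
    rw [h4]
    ring
  have hlastψ : ψ (S' (Fin.last (e + 1))) = - ∑ j' : Fin e, ψ (W j') := by
    have hsplit : ∑ j : Fin (e + 2), ψ (S' j)
        = (∑ j' : Fin (e + 1), ψ (S' j'.castSucc)) + ψ (S' (Fin.last (e + 1))) :=
      Fin.sum_univ_castSucc _
    have hsplit2 : ∑ j' : Fin (e + 1), ψ (S' j'.castSucc)
        = ψ (S' ((0 : Fin (e + 1)).castSucc))
          + ∑ j'' : Fin e, ψ (S' (j''.succ.castSucc)) := Fin.sum_univ_succ _
    have hz : ψ (S' ((0 : Fin (e + 1)).castSucc)) = 0 := by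
      have : ((0 : Fin (e + 1)).castSucc) = j0' := by
        apply Fin.ext; rfl
      rw [this, hS0, map_zero]
    have hmidW : ∀ j'' : Fin e, S' (j''.succ.castSucc) = W j'' := by
      intro j''
      rw [hW]
      congr 1
      all_goals (apply Fin.ext; simp [Fin.val_succ])
    rw [hsplit, hsplit2, hz, zero_add] at hsum
    rw [Finset.sum_congr rfl (fun j'' _ => congrArg ψ (hmidW j''))] at hsum
    linear_combination hsum
  have hρW : vl % (e + 2) = rho m e W := by
    have h1 : ((vl : ℕ) : ZMod (e + 2)) = ψ (S' (Fin.last (e + 1))) := by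
      rw [hvl, (ψval _).symm]
    have h2 : ((rho m e W : ℕ) : ZMod (e + 2)) = - ∑ j' : Fin e, ψ (W j') := by
      rw [rho_cast W]
      congr 1
      exact Finset.sum_congr rfl (fun j' _ => (ψval _).symm)
    have h3 : ((vl : ℕ) : ZMod (e + 2)) = ((rho m e W : ℕ) : ZMod (e + 2)) := by
      rw [h1, h2, hlastψ]
    have h4 := (ZMod.natCast_eq_natCast_iff _ _ _).mp h3
    have h5 : vl % (e + 2) = rho m e W % (e + 2) := h4
    rwa [Nat.mod_eq_of_lt (rho_lt W)] at h5
  refine ⟨W, vl / (e + 2), i * (e + 2) + c, ?_, ?_, ?_⟩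
  · exact Nat.div_lt_div_of_lt_of_dvd hdvd (ZMod.val_lt _)
  · calc i * (e + 2) + c < i * (e + 2) + (e + 2) := by omega
      _ = (i + 1) * (e + 2) := by ring
      _ ≤ m * (e + 2) := Nat.mul_le_mul_right _ (by omega)
      _ < m * (e + 2) + 1 := by omega
  · funext j
    have hdiv : (i * (e + 2) + c) / (e + 2) = i := by
      rw [show i * (e + 2) + c = c + (e + 2) * i from by ring,
        Nat.add_mul_div_left _ _ (by omega), Nat.div_eq_of_lt hck, Nat.zero_add]
    have hmod : (i * (e + 2) + c) % (e + 2) = c := by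
      rw [show i * (e + 2) + c = c + (e + 2) * i from by ring,
        Nat.add_mul_mod_self_left, Nat.mod_eq_of_lt hck]
    have key : Sf W (vl / (e + 2)) j = S' j := by
      by_cases h0 : (j : ℕ) = 0
      · have hj : j = j0' := Fin.ext h0
        rw [Sf, dif_pos h0, hj, hS0]
      · by_cases h1 : (j : ℕ) ≤ e
        · rw [Sf_midval W _ j h0 h1, hW]
          show S' ⟨(j : ℕ) - 1 + 1, by omega⟩ = S' j
          congr 1
          apply Fin.ext
          show (j : ℕ) - 1 + 1 = (j : ℕ)
          omega
        · have hj : j = Fin.last (e + 1) := by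
            apply Fin.ext
            have := j.isLt
            show (j : ℕ) = e + 1
            omega
          subst hj
          rw [Sf_lastval W]
          have hvleq : (e + 2) * (vl / (e + 2)) + rho m e W = vl := by
            rw [← hρW]
            exact Nat.div_add_mod vl (e + 2)
          rw [hvleq, hvl, ZMod.natCast_val, ZMod.cast_id]
    rw [sg, hdiv, hmod, key, hS']
    simp only
    ring

lemma fast_exists (hm4 : 4 * (e + 2) < m) (hdvd : (e + 2) ∣ m)
    (hcop : Nat.Coprime (e + 3) m) :
    ∃ s : Seg (Fin (e + 2)) (ZMod m),
      (∀ x : Fin (e + 2) → ZMod m, x ∈ s.ps) ∧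
      s.ps.length ≤ m ^ e * ((m / (e + 2)) * (m * (e + 2) + 1) + 2) ∧
      s.bs.length ≤ m ^ e * ((m / (e + 2)) * m + (m / (e + 2)) + 3) := by
  obtain ⟨sgr, hcov, hlen⟩ := gray_exists (m := m) (by omega) e
  obtain ⟨s, _, _, hmem, hps, hbs⟩ := chain_exists hm4 hdvd sgr.aligned
  rw [hlen] at hps hbs
  refine ⟨s, ?_, hps, hbs⟩
  intro x
  obtain ⟨W, t, τ, ht, hτ, rfl⟩ := decode hm4 hdvd hcop x
  exact hmem W (hcov W) t ht τ hτ

end Fast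

section Assemble

variable {m k' d : ℕ}

lemma castAdd_inj : Function.Injective (Fin.castAdd d : Fin k' → Fin (k' + d)) := by
  intro a b h
  have h1 : ((Fin.castAdd d a : Fin (k' + d)) : ℕ) = ((Fin.castAdd d b : Fin (k' + d)) : ℕ) :=
    congrArg Fin.val h
  apply Fin.ext
  simpa using h1

lemma stepAt_append_left {x y : Fin k' → ZMod m} {c : Fin k'} (h : StepAt x y c)
    (sl : Fin d → ZMod m) :
    StepAt (Fin.append x sl) (Fin.append y sl) (Fin.castAdd d c) := by
  intro j
  refine Fin.addCases (fun i => ?_) (fun i => ?_) j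
  · rw [Fin.append_left, Fin.append_left, h i]
    constructor
    · rintro rfl; rfl
    · intro hh; exact castAdd_inj hh
  · rw [Fin.append_right, Fin.append_right]
    constructor
    · intro hh; exact absurd rfl hh
    · intro hh
      exfalso
      have h1 := congrArg Fin.val hh
      have h2 : ((Fin.natAdd k' i : Fin (k' + d)) : ℕ) = k' + i := rfl
      have h3 : ((Fin.castAdd d c : Fin (k' + d)) : ℕ) = (c : ℕ) := rfl
      rw [h2, h3] at h1
      have := c.isLt
      omega

lemma stepAt_append_right {sl sl' : Fin d → ZMod m} {c : Fin d} (h : StepAt sl sl' c)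
    (B : Fin k' → ZMod m) :
    StepAt (Fin.append B sl) (Fin.append B sl') (Fin.natAdd k' c) := by
  intro j
  refine Fin.addCases (fun i => ?_) (fun i => ?_) j
  · rw [Fin.append_left, Fin.append_left]
    constructor
    · intro hh; exact absurd rfl hh
    · intro hh
      exfalso
      have h1 := congrArg Fin.val hh
      have h2 : ((Fin.natAdd k' c : Fin (k' + d)) : ℕ) = k' + (c : ℕ) := rfl
      have h3 : ((Fin.castAdd d i : Fin (k' + d)) : ℕ) = (i : ℕ) := rfl
      rw [h2, h3] at h1
      have := i.isLt
      omega
  · rw [Fin.append_right, Fin.append_right, h i]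
    constructor
    · rintro rfl; rfl
    · intro hh
      apply Fin.ext
      have h1 := congrArg Fin.val hh
      have h2 : ((Fin.natAdd k' i : Fin (k' + d)) : ℕ) = k' + (i : ℕ) := rfl
      have h3 : ((Fin.natAdd k' c : Fin (k' + d)) : ℕ) = k' + (c : ℕ) := rfl
      rw [h2, h3] at h1
      omega

lemma big_exists (hm : 2 ≤ m) (hk' : 0 < k') (F : Seg (Fin k') (ZMod m))
    (hcovF : ∀ xf : Fin k' → ZMod m, xf ∈ F.ps) :
    ∃ s : Seg (Fin (k' + d)) (ZMod m),
      (∀ x : Fin (k' + d) → ZMod m, x ∈ s.ps) ∧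
      s.ps.length = m ^ d * F.ps.length ∧
      s.bs.length = m ^ d * F.bs.length + (m ^ d - 1) := by
  haveI : NeZero m := ⟨by omega⟩
  obtain ⟨sl, hslcov, hsllen⟩ := gray_exists (m := m) hm d
  have hcslen : sl.cs.length = m ^ d - 1 := by
    have := sl.cs_length
    omega
  set slval : ℕ → (Fin d → ZMod m) := fun u => sl.ps.getD u (fun _ => 0) with hslval
  set FF : ℕ → Seg (Fin (k' + d)) (ZMod m) := fun u =>
    ((if u % 2 = 1 then F.reverse else F).map (fun xf => Fin.append xf (slval u))
      (Fin.castAdd d) (fun x y c h => stepAt_append_left h _) castAdd_inj) with hFF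
  set cdir : ℕ → Fin (k' + d) := fun u =>
    if h : u < sl.cs.length then Fin.natAdd k' (sl.cs[u]'h) else ⟨0, by omega⟩ with hcdir
  have hb : ∀ u, u < m ^ d - 1 → StepAt (FF u).last (FF (u + 1)).head (cdir u) := by
    intro u hu
    have hu' : u < sl.cs.length := by omega
    have hup : u + 1 < sl.ps.length := by
      rw [hsllen]
      have h1 : 1 ≤ m ^ d := Nat.one_le_pow _ _ (by omega)
      omega
    have hsl : StepAt (sl.ps[u]'(by omega)) (sl.ps[u + 1]'hup) (sl.cs[u]'hu') :=
      fun j => sl.aligned.getElem u hup hu' j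
    have hgu : slval u = sl.ps[u]'(by omega) := List.getD_eq_getElem _ _ _
    have hgu1 : slval (u + 1) = sl.ps[u + 1]'hup := List.getD_eq_getElem _ _ _
    have hcd : cdir u = Fin.natAdd k' (sl.cs[u]'hu') := dif_pos hu'
    rw [hcd]
    rcases Nat.mod_two_eq_zero_or_one u with he | ho
    · have h2 : (u + 1) % 2 = 1 := by omega
      simp only [hFF, Seg.map_last, Seg.map_head]
      rw [if_neg (by omega : ¬ u % 2 = 1), if_pos h2]
      simp only [Seg.reverse_head]
      rw [hgu, hgu1]
      exact stepAt_append_right hsl _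
    · have h2 : ¬ ((u + 1) % 2 = 1) := by omega
      simp only [hFF, Seg.map_last, Seg.map_head]
      rw [if_pos ho, if_neg h2]
      simp only [Seg.reverse_last]
      rw [hgu, hgu1]
      exact stepAt_append_right hsl _
  obtain ⟨s, hh, hl, hmem, hps, hbs⟩ := Seg.concat_exists (m ^ d - 1) FF cdir hb
  have hFFlen : ∀ u, (FF u).ps.length = F.ps.length := by
    intro u
    simp only [hFF, Seg.map_ps_length]
    split <;> simp
  have hFFbs : ∀ u, (FF u).bs.length = F.bs.length := by
    intro u
    simp only [hFF, Seg.map_bs_length]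
    split <;> simp
  have hmd : m ^ d - 1 + 1 = m ^ d := by
    have h1 : 1 ≤ m ^ d := Nat.one_le_pow _ _ (by omega)
    omega
  refine ⟨s, ?_, ?_, ?_⟩
  · intro x
    set xf : Fin k' → ZMod m := fun i => x (Fin.castAdd d i) with hxf
    set xs : Fin d → ZMod m := fun i => x (Fin.natAdd k' i) with hxs
    obtain ⟨u, hu, huv⟩ := List.mem_iff_getElem.mp (hslcov xs)
    have hxeq : Fin.append xf (slval u) = x := by
      rw [hslval]
      simp only
      rw [List.getD_eq_getElem _ _ hu, huv]
      funext j
      refine Fin.addCases (fun i => ?_) (fun i => ?_) j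
      · rw [Fin.append_left]
      · rw [Fin.append_right]
    have hxmem : x ∈ (FF u).ps := by
      simp only [hFF, Seg.map_ps, List.mem_map]
      refine ⟨xf, ?_, hxeq⟩
      split
      · simpa [Seg.reverse] using hcovF xf
      · exact hcovF xf
    exact hmem u (by rw [hsllen] at hu; omega) x hxmem
  · rw [hps, Finset.sum_congr rfl (fun u _ => hFFlen u)]
    simp [hmd]
  · rw [hbs, Finset.sum_congr rfl (fun u _ => hFFbs u)]
    simp [hmd]

end Assemble

end PGC

open PGC in
theorem pseudo_gray_code_small_redundancy' (q : ℕ) (hq : 2 ≤ q) (ε : ℝ) (hε : 0 < ε) :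
    ∃ N : ℕ, ∀ n : ℕ, N ≤ n →
      ∃ ps : List (Fin n → Fin (q ^ q ^ n)),
        (∀ v : Fin n → Fin (q ^ q ^ n), v ∈ ps) ∧
        ∃ cs : List (Fin n),
          cs.length + 1 = ps.length ∧
          (∀ (i : ℕ) (hi : i + 1 < ps.length) (hi' : i < cs.length) (j : Fin n),
            ((ps[i]'(Nat.lt_of_succ_lt hi)) j ≠ (ps[i + 1]'hi) j ↔ j = cs[i]'hi')) ∧
          ∃ r : ℝ, RunsLE cs r ∧
            r + (ps.length : ℝ) - (q : ℝ) ^ (n * q ^ n) ≤ ε * (q : ℝ) ^ (n * q ^ n) := by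
  classical
  set s0 : ℕ := max 1 ⌈16 / ε⌉₊ with hs0
  set K : ℕ := q ^ s0 with hK
  have hs01 : 1 ≤ s0 := le_max_left _ _
  have hKs0 : s0 < K := by
    calc s0 < 2 ^ s0 := Nat.lt_two_pow_self (n := s0)
      _ ≤ q ^ s0 := Nat.pow_le_pow_left hq s0
  have hK2 : 2 ≤ K := by
    calc 2 = 2 ^ 1 := rfl
      _ ≤ 2 ^ s0 := Nat.pow_le_pow_right (by omega) hs01
      _ ≤ q ^ s0 := Nat.pow_le_pow_left hq s0
  have hKeps : (16 : ℝ) / ε ≤ (K : ℝ) := by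
    have h1 : (16 : ℝ) / ε ≤ (⌈16 / ε⌉₊ : ℝ) := Nat.le_ceil _
    have h2 : ((⌈16 / ε⌉₊ : ℕ) : ℝ) ≤ (s0 : ℝ) := by
      exact_mod_cast le_max_right 1 ⌈16 / ε⌉₊
    have h3 : (s0 : ℝ) ≤ (K : ℝ) := by exact_mod_cast Nat.le_of_lt hKs0
    linarith
  refine ⟨K + 1, ?_⟩
  intro n hn
  obtain ⟨e, hKe⟩ : ∃ e, K = e + 2 := ⟨K - 2, by omega⟩
  obtain ⟨d, rfl⟩ : ∃ d, n = e + 2 + d := ⟨n - (e + 2), by omega⟩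
  set n' : ℕ := e + 2 + d with hn'
  set m : ℕ := q ^ q ^ n' with hm
  have hqn' : n' < q ^ n' := Nat.lt_pow_self (n := n') (a := q) (by omega)
  have h2n : 2 ^ n' ≤ m := by
    calc 2 ^ n' ≤ 2 ^ q ^ n' := Nat.pow_le_pow_right (by omega) (le_of_lt hqn')
      _ ≤ q ^ q ^ n' := Nat.pow_le_pow_left hq _
  have hn'm : n' < m := by
    calc n' < 2 ^ n' := Nat.lt_two_pow_self (n := n')
      _ ≤ m := h2n
  have hKn' : K + 1 ≤ n' := hn
  have hs0qn : s0 + 3 ≤ q ^ n' := by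
    have ha : s0 + 1 ≤ 2 ^ s0 := Nat.lt_two_pow_self (n := s0)
    have hb : 2 ^ (s0 + 2) ≤ 2 ^ n' := Nat.pow_le_pow_right (by omega) (by omega)
    have hc : 2 ^ n' ≤ q ^ n' := Nat.pow_le_pow_left hq _
    have hd : 2 ^ (s0 + 2) = 4 * 2 ^ s0 := by ring
    omega
  have hm4 : 4 * (e + 2) < m := by
    have h2 : 4 * (e + 2) < q ^ (s0 + 3) := by
      rw [← hKe]
      have h5 : q ^ (s0 + 3) = q ^ s0 * q ^ 3 := by ring
      rw [h5, ← hK]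
      have hq3 : 8 ≤ q ^ 3 := by
        calc 8 = 2 ^ 3 := rfl
          _ ≤ q ^ 3 := Nat.pow_le_pow_left hq 3
      nlinarith [hK2]
    have h3 : q ^ (s0 + 3) ≤ q ^ q ^ n' := Nat.pow_le_pow_right (by omega) hs0qn
    omega
  have hdvd : (e + 2) ∣ m := by
    rw [← hKe, hK, hm]
    exact pow_dvd_pow q (by omega)
  have hcop : Nat.Coprime (e + 3) m := by
    have h1 : Nat.Coprime (K + 1) K := by
      show Nat.gcd (K + 1) K = 1
      rw [Nat.gcd_comm, Nat.gcd_rec]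
      have hmod : (K + 1) % K = 1 := by
        rw [Nat.add_mod_left]
        exact Nat.mod_eq_of_lt (by omega)
      rw [hmod]
      exact Nat.gcd_one_left K
    have h2 : q ∣ K := by rw [hK]; exact dvd_pow_self q (by omega)
    have h3 : Nat.Coprime (K + 1) q := Nat.Coprime.coprime_dvd_right h2 h1
    have h4 : Nat.Coprime (K + 1) m := by rw [hm]; exact Nat.Coprime.pow_right _ h3
    have h5 : e + 3 = K + 1 := by omega
    rwa [h5]
  obtain ⟨F, hFcov, hFps, hFbs⟩ := fast_exists (m := m) (e := e) hm4 hdvd hcop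
  obtain ⟨s, hcov, hps, hbs⟩ :=
    big_exists (d := d) (by omega : 2 ≤ m) (by omega : 0 < e + 2) F hFcov
  haveI : NeZero m := ⟨by omega⟩
  set θ : (Fin n' → ZMod m) → (Fin n' → Fin m) :=
    fun f => fun j => (⟨(f j).val, ZMod.val_lt _⟩ : Fin m) with hθ
  have pres : ∀ (x y : Fin n' → ZMod m) (c : Fin n'), StepAt x y c → StepAt (θ x) (θ y) c := by
    intro x y c h j
    have hiff : θ x j = θ y j ↔ x j = y j := by
      constructor
      · intro hh
        exact ZMod.val_injective _ (congrArg Fin.val hh)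
      · intro hh
        rw [hθ]
        simp only [hh]
    rw [← h j]
    exact not_congr hiff
  set sF : Seg (Fin n') (Fin m) := s.map θ id pres Function.injective_id with hsF
  have hcovF : ∀ v : Fin n' → Fin m, v ∈ sF.ps := by
    intro v
    have hfv : θ (fun j => ((v j : ℕ) : ZMod m)) = v := by
      funext j
      rw [hθ]
      simp only
      apply Fin.ext
      simp only
      exact ZMod.val_cast_of_lt (v j).isLt
    rw [hsF]
    simp only [Seg.map_ps, List.mem_map]
    exact ⟨_, hcov _, hfv⟩
  -- numeric bounds (ℕ)
  set R : ℕ := m / (e + 2) with hR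
  have hRkNat : (e + 2) * R = m := Nat.mul_div_cancel' hdvd
  have hR1 : 1 ≤ R := by
    rw [hR]
    apply Nat.one_le_div_iff (by omega) |>.mpr
    omega
  have hRm : R ≤ m := Nat.div_le_self _ _
  set MM : ℕ := m ^ (d + e) with hMM
  have hpsF : sF.ps.length = m ^ d * F.ps.length := by
    rw [hsF, Seg.map_ps_length, hps]
  have hbsF : sF.bs.length = m ^ d * F.bs.length + (m ^ d - 1) := by
    rw [hsF, Seg.map_bs_length, hbs]
  have hprod : R * (m * (e + 2) + 1) = m * m + R := by
    calc R * (m * (e + 2) + 1) = ((e + 2) * R) * m + R := by ring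
      _ = m * m + R := by rw [hRkNat]
  have hclaimPS : sF.ps.length ≤ MM * (m * m) + MM * (R + 2) := by
    rw [hpsF]
    calc m ^ d * F.ps.length ≤ m ^ d * (m ^ e * (R * (m * (e + 2) + 1) + 2)) :=
          Nat.mul_le_mul_left _ hFps
      _ = m ^ d * (m ^ e * (m * m + R + 2)) := by rw [hprod]
      _ = MM * (m * m) + MM * (R + 2) := by rw [hMM, pow_add]; ring
  have hclaimBS : sF.bs.length ≤ MM * (R * m) + MM * (R + 3) + m ^ d := by
    rw [hbsF]
    calc m ^ d * F.bs.length + (m ^ d - 1)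
        ≤ m ^ d * (m ^ e * (R * m + R + 3)) + m ^ d :=
          Nat.add_le_add (Nat.mul_le_mul_left _ hFbs) (by omega)
      _ = MM * (R * m) + MM * (R + 3) + m ^ d := by rw [hMM, pow_add]; ring
  have hsmall : MM * (R + 2) + (MM * (R + 3) + m ^ d) ≤ 8 * (MM * m) := by
    have h1 : MM * (R + 2) + MM * (R + 3) = MM * (2 * R + 5) := by ring
    have h2 : 2 * R + 5 ≤ 7 * R := by omega
    have h3 : MM * (2 * R + 5) ≤ MM * (7 * R) := Nat.mul_le_mul_left _ h2
    have h4 : MM * (7 * R) ≤ MM * (7 * m) := Nat.mul_le_mul_left _ (by omega)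
    have h5 : m ^ d ≤ MM * m := by
      rw [hMM]
      calc m ^ d ≤ m ^ (d + e) := Nat.pow_le_pow_right (by omega) (by omega)
        _ ≤ m ^ (d + e) * m := Nat.le_mul_of_pos_right _ (by omega)
    have h6 : MM * (7 * m) = 7 * (MM * m) := by ring
    omega
  have hMn : m ^ n' = MM * (m * m) := by
    rw [hMM, hn']
    rw [show e + 2 + d = (d + e) + 2 from by omega]
    rw [pow_add]
    ring
  have htotal : sF.ps.length + sF.bs.length ≤ m ^ n' + MM * (R * m) + 8 * (MM * m) := by
    have := Nat.add_le_add hclaimPS hclaimBS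
    omega
  -- cast to ℝ
  have hMcast : ((m : ℝ)) ^ n' = (q : ℝ) ^ (n' * q ^ n') := by
    have h1 : m ^ n' = q ^ (n' * q ^ n') := by
      rw [hm, ← pow_mul, Nat.mul_comm]
    have h2 : ((m ^ n' : ℕ) : ℝ) = ((q ^ (n' * q ^ n') : ℕ) : ℝ) := by rw [h1]
    push_cast at h2
    exact h2
  have h16K : (16 : ℝ) ≤ ε * ((e : ℝ) + 2) := by
    rw [div_le_iff₀ hε] at hKeps
    have hKcast : (K : ℝ) = (e : ℝ) + 2 := by
      rw [hKe]; push_cast; ring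
    nlinarith [hKeps]
  have h16m : (16 : ℝ) ≤ ε * (m : ℝ) := by
    rw [div_le_iff₀ hε] at hKeps
    have h1 : (K : ℝ) ≤ (m : ℝ) := by
      have : K ≤ m := by omega
      exact_mod_cast this
    nlinarith [hKeps]
  have F1 : (sF.bs.length : ℝ) + (sF.ps.length : ℝ)
      ≤ (m : ℝ) ^ n' + (MM : ℝ) * ((R : ℝ) * (m : ℝ)) + 8 * ((MM : ℝ) * (m : ℝ)) := by
    have hc := Nat.cast_le (α := ℝ) |>.mpr htotal
    push_cast at hc
    linarith
  have F3 : (MM : ℝ) * ((R : ℝ) * (m : ℝ)) * ((e : ℝ) + 2) = (m : ℝ) ^ n' := by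
    have hnat : (MM * (R * m)) * (e + 2) = m ^ n' := by
      calc (MM * (R * m)) * (e + 2) = MM * (((e + 2) * R) * m) := by ring
        _ = MM * (m * m) := by rw [hRkNat]
        _ = m ^ n' := hMn.symm
    have hc := congrArg (fun z : ℕ => (z : ℝ)) hnat
    push_cast at hc
    linarith
  have F4 : ((MM : ℝ) * (m : ℝ)) * (m : ℝ) = (m : ℝ) ^ n' := by
    have hnat : (MM * m) * m = m ^ n' := by
      rw [hMn]; ring
    have hc := congrArg (fun z : ℕ => (z : ℝ)) hnat
    push_cast at hc
    linarith
  have hMMpos : (0 : ℝ) ≤ (MM : ℝ) * ((R : ℝ) * (m : ℝ)) := by positivity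
  have hYpos : (0 : ℝ) ≤ (MM : ℝ) * (m : ℝ) := by positivity
  have hXle : (MM : ℝ) * ((R : ℝ) * (m : ℝ)) ≤ (ε / 2) * (m : ℝ) ^ n' := by
    nlinarith [mul_nonneg hMMpos (sub_nonneg.mpr h16K)]
  have hYle : 8 * ((MM : ℝ) * (m : ℝ)) ≤ (ε / 2) * (m : ℝ) ^ n' := by
    nlinarith [mul_nonneg hYpos (sub_nonneg.mpr h16m)]
  refine ⟨sF.ps, hcovF, sF.cs, sF.cs_length,
    (fun i hi hi' j => sF.aligned.getElem i hi hi' j),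
    (sF.bs.length : ℝ), ⟨sF.bs, sF.flat, sF.good, le_refl _⟩, ?_⟩
  rw [← hMcast]
  linarith [F1, hXle, hYle]

/-- For every `q ≥ 2` and `ε > 0` there is `N` such that for every `n ≥ N` there is an
`(n, q^(q^n))`-pseudo-Gray code `ps` (a sequence over `(Fin (q^(q^n)))^n` containing
every element, in which consecutive entries differ in exactly one coordinate, recorded
by `cs`) whose redundancy `r(P) + L - (q^(q^n))^n` is at most `ε·q^(n·q^n)`. -/
theorem pseudo_gray_code_small_redundancy (q : ℕ) (hq : 2 ≤ q) (ε : ℝ) (hε : 0 < ε) :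
    ∃ N : ℕ, ∀ n : ℕ, N ≤ n →
      ∃ ps : List (Fin n → Fin (q ^ q ^ n)),
        (∀ v : Fin n → Fin (q ^ q ^ n), v ∈ ps) ∧
        ∃ cs : List (Fin n),
          cs.length + 1 = ps.length ∧
          (∀ (i : ℕ) (hi : i + 1 < ps.length) (hi' : i < cs.length) (j : Fin n),
            ((ps[i]'(by omega)) j ≠ (ps[i + 1]'hi) j ↔ j = cs[i]'hi')) ∧
          ∃ r : ℝ, RunsLE cs r ∧
            r + (ps.length : ℝ) - (q : ℝ) ^ (n * q ^ n) ≤ ε * (q : ℝ) ^ (n * q ^ n) := by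
  exact pseudo_gray_code_small_redundancy' q hq ε hε
end

section
/- Let A be a finite set with |A| = q ≥ 2 and let m ≥ n ≥ 1. There is no transformation f : A^m → A^m that simulates in parallel every transformation of A^n; that is, there is no f such that for every g : A^n → A^n there exists k ≥ 1 with g(pr(x)) = pr(f^k(x)) for all x ∈ A^m. -/
/-! Two iterates of `f` commute, so if each of them makes `p` constant, both constants are
`p (f^[k + l] x)`. Hence no `f` can simulate two distinct constant transformations. -/

theorem Function.eq_of_iterate_comp_eq_const {X Y : Type*} [Nonempty X] (f : X → X) (p : X → Y)
    {a b : Y} {k l : ℕ} (ha : ∀ x, p (f^[k] x) = a) (hb : ∀ x, p (f^[l] x) = b) : a = b := by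
  obtain ⟨x⟩ := ‹Nonempty X›
  calc a = p (f^[k] (f^[l] x)) := (ha _).symm
    _ = p (f^[l] (f^[k] x)) := by
      rw [← Function.iterate_add_apply, add_comm, Function.iterate_add_apply]
    _ = b := hb _

/-- There is no transformation `f` of `A^m` that simulates in parallel every
transformation of `A^n`: no `f` such that for every `g : A^n → A^n` there is `k ≥ 1`
with `g (pr x) = pr (f^[k] x)` for all `x`. -/
theorem no_parallel_universal (q n m : ℕ) (hq : 2 ≤ q) (hn : 1 ≤ n) (hmn : n ≤ m)
    (A : Type*) [Fintype A] (hA : Fintype.card A = q) :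
    ¬ ∃ f : (Fin m → A) → Fin m → A,
        ∀ g : (Fin n → A) → Fin n → A,
          ∃ k : ℕ, 1 ≤ k ∧ ∀ x, g (pr hmn x) = pr hmn (f^[k] x) := by
  rintro ⟨f, hf⟩
  obtain ⟨a, b, hab⟩ := Fintype.one_lt_card_iff.mp (show 1 < Fintype.card A by omega)
  have : Nonempty (Fin m → A) := ⟨fun _ => a⟩
  obtain ⟨k, -, hk⟩ := hf fun _ _ => a
  obtain ⟨l, -, hl⟩ := hf fun _ _ => b
  have hconst : (fun _ : Fin n => a) = fun _ => b :=
    Function.eq_of_iterate_comp_eq_const f (pr hmn) (fun x => (hk x).symm) (fun x => (hl x).symm)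
  exact hab (congrFun hconst ⟨0, hn⟩)
end

section
/- Let A be a finite set with |A| = q ≥ 2 and let n ≥ 1. There exist m ≥ n and a transformation f : A^m → A^m that is a complete quasi-parallel n-universal transformation, i.e. f sequentially simulates in quasi-parallel every finite sequence of transformations of A^n. -/
/-- `F^([m-1])`: update all registers except the last one in parallel using the
coordinate functions of `f`. -/
def parAll {A : Type*} {m : ℕ} (f : (Fin (m + 1) → A) → Fin (m + 1) → A) :
    (Fin (m + 1) → A) → Fin (m + 1) → A :=
  fun x i => if i = Fin.last m then x i else f x i

/-- `F^(m)`: the instruction updating only the last register. -/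
def parLast {A : Type*} {m : ℕ} (f : (Fin (m + 1) → A) → Fin (m + 1) → A) :
    (Fin (m + 1) → A) → Fin (m + 1) → A :=
  fun x i => if i = Fin.last m then f x i else x i

/-- Apply a word over `{F^([m-1]), F^(m)}` (encoded by booleans: `false ↦ F^([m-1])`,
`true ↦ F^(m)`), first letter first. -/
def applyQP {A : Type*} {m : ℕ} (f : (Fin (m + 1) → A) → Fin (m + 1) → A) :
    List Bool → (Fin (m + 1) → A) → Fin (m + 1) → A
  | [], x => x
  | b :: l, x => applyQP f l ((if b then parLast f else parAll f) x)

section Registers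

variable {A : Type*} {m : ℕ}

theorem parAll_snoc (u : (Fin (m + 1) → A) → Fin m → A) (ρ : (Fin (m + 1) → A) → A)
    (x : Fin (m + 1) → A) :
    parAll (fun y => Fin.snoc (u y) (ρ y)) x = Fin.snoc (u x) (x (Fin.last m)) := by
  funext i
  induction i using Fin.lastCases with
  | last => simp [parAll]
  | cast j => simp [parAll, (Fin.castSucc_lt_last j).ne]

theorem parLast_snoc (u : (Fin (m + 1) → A) → Fin m → A) (ρ : (Fin (m + 1) → A) → A)
    (x : Fin (m + 1) → A) :
    parLast (fun y => Fin.snoc (u y) (ρ y)) x = Fin.snoc (Fin.init x) (ρ x) := by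
  funext i
  induction i using Fin.lastCases with
  | last => simp [parLast]
  | cast j => simp [parLast, (Fin.castSucc_lt_last j).ne, Fin.init]

theorem applyQP_true_cons_replicate_false (f : (Fin (m + 1) → A) → Fin (m + 1) → A) (k : ℕ)
    (x : Fin (m + 1) → A) :
    applyQP f (true :: List.replicate k false) x = (parAll f)^[k] (parLast f x) := by
  suffices ∀ y, applyQP f (List.replicate k false) y = (parAll f)^[k] y from this _
  induction k with
  | zero => exact fun _ => rfl
  | succ k ih => exact fun y => ih (parAll f y)

end Registers

section Schedule

def wordSchedule (t : ℕ → ℕ) : ℕ → List Bool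
  | 0 => true :: List.replicate (t 0) false
  | i + 1 => List.replicate (t (i + 1) - t i) false

theorem flatten_map_wordSchedule_range {t : ℕ → ℕ} (ht : Monotone t) (i : ℕ) :
    ((List.range (i + 1)).map (wordSchedule t)).flatten = true :: List.replicate (t i) false := by
  induction i with
  | zero => simp [wordSchedule]
  | succ i ih =>
    rw [List.range_succ, List.map_append, List.flatten_append, ih]
    simp [wordSchedule, Nat.add_sub_cancel' (ht i.le_succ)]

theorem exists_words_of_residues {P : ℕ} [NeZero P] (c : ℕ → ZMod P) (N : ℕ) :
    ∃ hs : List (List Bool), hs.length = N ∧ (∀ w ∈ hs, w ≠ []) ∧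
      hs.flatten.count true ≤ 1 ∧
      ∀ i < N, ∃ k : ℕ, 0 < k ∧ (k : ZMod P) = c i ∧
        (hs.take (i + 1)).flatten = true :: List.replicate k false := by
  set t : ℕ → ℕ := fun i => (c i).val + P * (i + 1)
  have ht : StrictMono t := strictMono_nat_of_lt_succ fun i => by
    have := (c i).val_lt
    simp only [t]
    nlinarith
  have hflat := flatten_map_wordSchedule_range ht.monotone
  refine ⟨(List.range N).map (wordSchedule t), by simp, ?_, ?_, fun i hi => ?_⟩
  · simp only [List.mem_map, List.mem_range]
    rintro _ ⟨(_ | i), -, rfl⟩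
    · simp [wordSchedule]
    · simpa [wordSchedule] using Nat.sub_ne_zero_of_lt (ht i.lt_succ_self)
  · calc _ ≤ (((List.range (N + 1)).map (wordSchedule t)).flatten).count true := by
          refine List.Sublist.count_le _ (List.IsPrefix.sublist ?_)
          simp only [List.range_succ, List.map_append, List.flatten_append]
          exact List.prefix_append _ _
      _ = 1 := by simp [hflat N, List.count_replicate]
  · refine ⟨t i, by have := NeZero.pos P; positivity, by simp [t], ?_⟩
    rw [← List.map_take, List.take_range, min_eq_left hi, hflat]

end Schedule

section Machine

structure Control (A : Type*) (n P : ℕ) where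
  base : Fin n → A
  clock : ZMod P
  flag : Bool

variable {A : Type*} {n M P : ℕ}

instance [Fintype A] [NeZero P] : Fintype (Control A n P) :=
  Fintype.ofEquiv ((Fin n → A) × ZMod P × Bool)
    { toFun := fun s => ⟨s.1, s.2.1, s.2.2⟩
      invFun := fun s => (s.base, s.clock, s.flag)
      left_inv := fun _ => rfl
      right_inv := fun _ => rfl }

instance [Nonempty A] : Nonempty (Control A n P) :=
  ⟨⟨fun _ => Classical.arbitrary A, 0, false⟩⟩

def Control.tick (s : Control A n P) (y : Fin n → A) (β : Bool) : Control A n P :=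
  if s.flag = β then ⟨y, 1, !β⟩ else { s with clock := s.clock + 1 }

def display (x : Fin (n + M + 1) → A) : Fin n → A := fun i => x (Fin.castAdd M i).castSucc

def memory (x : Fin (n + M + 1) → A) : Fin M → A := fun j => x (Fin.natAdd n j).castSucc

theorem pr_eq_display (hmn : n ≤ n + M + 1) (x : Fin (n + M + 1) → A) :
    pr hmn x = display x := rfl

variable (G : ZMod P → (Fin n → A) → Fin n → A) (enc : Control A n P ↪ (Fin M → A))
  (code : Bool ↪ A)

def render (s : Control A n P) (a : A) : Fin (n + M + 1) → A :=
  Fin.snoc (Fin.append (G s.clock s.base) (enc s)) a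

@[simp]
theorem display_render (s : Control A n P) (a : A) :
    display (render G enc s a) = G s.clock s.base := by
  funext i
  simp [display, render]

@[simp]
theorem memory_render (s : Control A n P) (a : A) : memory (render G enc s a) = enc s := by
  funext j
  simp only [memory, render, Fin.snoc_castSucc, Fin.append_right]

@[simp]
theorem render_last (s : Control A n P) (a : A) : render G enc s a (Fin.last _) = a := by
  simp [render]

theorem display_snoc_init (x : Fin (n + M + 1) → A) (a : A) :
    display (Fin.snoc (Fin.init x) a : Fin (n + M + 1) → A) = display x := by
  funext i
  simp [display, Fin.init]

theorem memory_snoc_init (x : Fin (n + M + 1) → A) (a : A) :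
    memory (Fin.snoc (Fin.init x) a : Fin (n + M + 1) → A) = memory x := by
  funext j
  simp only [memory, Fin.snoc_castSucc, Fin.init]

variable [Nonempty A]

noncomputable def decode (x : Fin (n + M + 1) → A) : Control A n P :=
  Function.invFun enc (memory x)

@[simp]
theorem decode_render (s : Control A n P) (a : A) : decode enc (render G enc s a) = s := by
  rw [decode, memory_render, Function.leftInverse_invFun enc.injective]

noncomputable def clockMachine (x : Fin (n + M + 1) → A) : Fin (n + M + 1) → A :=
  render G enc ((decode enc x).tick (display x) (Function.invFun code (x (Fin.last _))))
    (code (decode enc x).flag)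

theorem parAll_clockMachine (x : Fin (n + M + 1) → A) :
    parAll (clockMachine G enc code) x =
      render G enc ((decode enc x).tick (display x) (Function.invFun code (x (Fin.last _))))
        (x (Fin.last _)) :=
  parAll_snoc _ _ x

theorem parLast_clockMachine (x : Fin (n + M + 1) → A) :
    parLast (clockMachine G enc code) x = Fin.snoc (Fin.init x) (code (decode enc x).flag) :=
  parLast_snoc _ _ x

theorem parAll_clockMachine_render {s : Control A n P} {a : A}
    (hs : s.flag ≠ Function.invFun code a) :
    parAll (clockMachine G enc code) (render G enc s a) =
      render G enc { s with clock := s.clock + 1 } a := by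
  rw [parAll_clockMachine]
  simp [Control.tick, hs]

theorem iterate_parAll_clockMachine_render {s : Control A n P} {a : A}
    (hs : s.flag ≠ Function.invFun code a) (k : ℕ) :
    (parAll (clockMachine G enc code))^[k] (render G enc s a) =
      render G enc { s with clock := s.clock + k } a := by
  induction k generalizing s with
  | zero => simp
  | succ k ih =>
    rw [Function.iterate_succ_apply, parAll_clockMachine_render G enc code hs,
      ih (s := { s with clock := s.clock + 1 }) hs]
    simp only [Nat.cast_succ, add_assoc, add_comm (1 : ZMod P)]

theorem parAll_clockMachine_parLast (x : Fin (n + M + 1) → A) :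
    parAll (clockMachine G enc code) (parLast (clockMachine G enc code) x) =
      render G enc ⟨display x, 1, !(decode enc x).flag⟩ (code (decode enc x).flag) := by
  rw [parLast_clockMachine, parAll_clockMachine, decode, memory_snoc_init, display_snoc_init,
    Fin.snoc_last, Function.leftInverse_invFun code.injective]
  simp [Control.tick, decode]

end Machine

theorem exists_clockMachine {A : Type*} [Fintype A] {n P : ℕ} [NeZero P] (code : Bool ↪ A)
    (G : ZMod P → (Fin n → A) → Fin n → A) :
    ∃ (m : ℕ) (hmn : n ≤ m + 1) (f : (Fin (m + 1) → A) → Fin (m + 1) → A),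
      ∀ (x : Fin (m + 1) → A) (k : ℕ), 0 < k →
        pr hmn ((parAll f)^[k] (parLast f x)) = G k (pr hmn x) := by
  have : Nonempty A := ⟨code false⟩
  set M := Fintype.card (Control A n P)
  obtain ⟨enc⟩ : Nonempty (Control A n P ↪ (Fin M → A)) := by
    apply Function.Embedding.nonempty_of_card_le
    calc M ≤ 2 ^ M := Nat.lt_two_pow_self.le
      _ ≤ Fintype.card A ^ M :=
        Nat.pow_le_pow_left (by simpa using Fintype.card_le_of_embedding code) M
      _ = _ := by simp
  refine ⟨n + M, by omega, clockMachine G enc code, fun x k hk => ?_⟩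
  obtain ⟨k, rfl⟩ := Nat.exists_eq_add_one_of_ne_zero hk.ne'
  rw [Function.iterate_succ_apply, parAll_clockMachine_parLast,
    iterate_parAll_clockMachine_render, pr_eq_display, pr_eq_display, display_render]
  · push_cast
    rw [add_comm]
  · simp [Function.leftInverse_invFun code.injective _]

theorem complete_quasi_parallel_universal_general (q n : ℕ) (hq : 2 ≤ q)
    (A : Type*) [Fintype A] (hA : Fintype.card A = q) :
    ∃ (m : ℕ) (hmn : n ≤ m + 1) (f : (Fin (m + 1) → A) → Fin (m + 1) → A),
      ∀ gs : List ((Fin n → A) → Fin n → A),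
        ∃ hs : List (List Bool),
          hs.length = gs.length ∧ (∀ b ∈ hs, b ≠ []) ∧
          hs.flatten.count true ≤ 1 ∧
          ∀ (i : ℕ) (hi : i < gs.length) (x : Fin (m + 1) → A),
            gs.get ⟨i, hi⟩ (pr hmn x) = pr hmn (applyQP f ((hs.take (i + 1)).flatten) x) := by
  classical
  obtain ⟨code⟩ : Nonempty (Bool ↪ A) :=
    Function.Embedding.nonempty_of_card_le (by simpa [hA])
  set P := Fintype.card ((Fin n → A) → Fin n → A)
  have : NeZero P := ⟨(Fintype.card_pos_iff.mpr ⟨id⟩).ne'⟩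
  let e : ((Fin n → A) → Fin n → A) ≃ ZMod P := Fintype.equivOfCardEq (ZMod.card P).symm
  obtain ⟨m, hmn, f, hf⟩ := exists_clockMachine code e.symm
  refine ⟨m, hmn, f, fun gs => ?_⟩
  obtain ⟨hs, hlen, hne, hcount, hflat⟩ :=
    exists_words_of_residues (fun i => e (gs.getD i id)) gs.length
  refine ⟨hs, hlen, hne, hcount, fun i hi x => ?_⟩
  obtain ⟨k, hk, hke, hw⟩ := hflat i hi
  rw [hw, applyQP_true_cons_replicate_false, hf x k hk, hke, List.getD_eq_getElem _ _ hi,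
    Equiv.symm_apply_apply, List.get_eq_getElem]

/-- There exists a complete quasi-parallel `n`-universal transformation: some `f` on
`A^m` (`m ≥ n`) sequentially simulates every finite sequence of transformations of
`A^n` by nonempty compositions of `F^([m-1])` and `F^(m)`, using `F^(m)` at most once
in total. -/
theorem complete_quasi_parallel_universal (q n : ℕ) (hq : 2 ≤ q) (hn : 1 ≤ n)
    (A : Type*) [Fintype A] (hA : Fintype.card A = q) :
    ∃ (m : ℕ) (hmn : n ≤ m + 1) (f : (Fin (m + 1) → A) → Fin (m + 1) → A),
      ∀ gs : List ((Fin n → A) → Fin n → A),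
        ∃ hs : List (List Bool),
          hs.length = gs.length ∧ (∀ b ∈ hs, b ≠ []) ∧
          hs.flatten.count true ≤ 1 ∧
          ∀ (i : ℕ) (hi : i < gs.length) (x : Fin (m + 1) → A),
            gs.get ⟨i, hi⟩ (pr hmn x) = pr hmn (applyQP f ((hs.take (i + 1)).flatten) x) :=
  complete_quasi_parallel_universal_general q n hq A hA
end
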